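/- arXiv:math/9510215 — 9 statements merged into one kernel-verified Lean document; each statement's English description precedes it below -/
import Mathlib

section
/- There exists a family ⟨A^α_k : α < ω₁, k < ω⟩ of finite subsets of ω₁ such that for all α < ω₁: (1) α = ⋃_{k<ω} A^α_k; (2) if k < l then A^α_k ⊆ A^α_l; and (3) if β < α and β ∈ A^α_k then A^β_k = A^α_k ∩ β. -/
/-!
Recursion on `α`: `A 0 k = ∅`, `A (β + 1) k = insert β (A β k)`, and at a countable limit `α`
fix a strictly increasing sequence `γ` cofinal in `α` and put `A α k = A (γ m) k`, where `m ≤ k`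
is largest with `γ 0 ∈ A (γ 1) k, …, γ (m - 1) ∈ A (γ m) k`. Along such a chain coherence makes
each `A (γ i) k` an initial segment of `A (γ m) k`, so `m` grows with `k` and eventually passes
every `n`; this yields monotonicity and exhaustion at `α`, while coherence at `α` is inherited
from `γ m`.
-/

open Order Filter Cardinal Ordinal

theorem Finset.filter_lt_filter_lt {ι : Type*} [LinearOrder ι] {s : Finset ι} {a b : ι}
    (h : b ≤ a) : (s.filter (· < a)).filter (· < b) = s.filter (· < b) := by
  rw [Finset.filter_filter]
  exact Finset.filter_congr fun x _ => and_iff_right_of_imp fun hx => hx.trans_le h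

structure IsCoherentFiltrationAt (A : Ordinal → ℕ → Finset Ordinal) (α : Ordinal) : Prop where
  lt_iff_exists_mem : ∀ β, β < α ↔ ∃ k, β ∈ A α k
  monotone : Monotone (A α)
  filter_lt : ∀ β < α, ∀ k, β ∈ A α k → A β k = (A α k).filter (· < β)

namespace IsCoherentFiltrationAt

variable {A : Ordinal → ℕ → Finset Ordinal} {α β : Ordinal} {k : ℕ}

theorem lt_of_mem (h : IsCoherentFiltrationAt A α) (hβ : β ∈ A α k) : β < α :=
  (h.lt_iff_exists_mem β).2 ⟨k, hβ⟩

theorem filter_lt_self (h : IsCoherentFiltrationAt A α) : (A α k).filter (· < α) = A α k :=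
  Finset.filter_true_of_mem fun _ => h.lt_of_mem

theorem eventually_mem (h : IsCoherentFiltrationAt A α) (hβ : β < α) :
    ∀ᶠ k in atTop, β ∈ A α k :=
  let ⟨k, hk⟩ := (h.lt_iff_exists_mem β).1 hβ
  eventually_atTop.2 ⟨k, fun _ hl => h.monotone hl hk⟩

theorem zero (hA : ∀ k, A 0 k = ∅) : IsCoherentFiltrationAt A 0 where
  lt_iff_exists_mem β := by simp [hA]
  monotone k l _ := by simp [hA]
  filter_lt β hβ := (not_lt_zero hβ).elim

theorem add_one (h : IsCoherentFiltrationAt A β) (hA : ∀ k, A (β + 1) k = insert β (A β k)) :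
    IsCoherentFiltrationAt A (β + 1) where
  lt_iff_exists_mem γ := by
    simp [hA, Order.lt_add_one_iff, le_iff_lt_or_eq, h.lt_iff_exists_mem, exists_or, or_comm]
  monotone k l hkl := by
    simp only [hA]
    exact Finset.insert_subset_insert _ (h.monotone hkl)
  filter_lt γ _ k hγ := by
    rw [hA, Finset.filter_insert] at *
    rcases Finset.mem_insert.1 hγ with rfl | hγ
    · rw [if_neg (lt_irrefl γ), h.filter_lt_self]
    · rw [if_neg (h.lt_of_mem hγ).not_gt]
      exact h.filter_lt γ (h.lt_of_mem hγ) k hγ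

end IsCoherentFiltrationAt

noncomputable def chainLength (A : Ordinal → ℕ → Finset Ordinal) (γ : ℕ → Ordinal) (k : ℕ) : ℕ :=
  Nat.findGreatest (fun n => ∀ i < n, γ i ∈ A (γ (i + 1)) k) k

section chainLength

variable {A : Ordinal → ℕ → Finset Ordinal} {γ : ℕ → Ordinal} {k n : ℕ}

theorem chainLength_le : chainLength A γ k ≤ k :=
  Nat.findGreatest_le k

theorem mem_of_lt_chainLength {i : ℕ} (hi : i < chainLength A γ k) : γ i ∈ A (γ (i + 1)) k :=
  Nat.findGreatest_spec (P := fun n => ∀ i < n, γ i ∈ A (γ (i + 1)) k) (Nat.zero_le k)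
    (fun _ h => (Nat.not_lt_zero _ h).elim) i hi

theorem le_chainLength (hn : n ≤ k) (h : ∀ i < n, γ i ∈ A (γ (i + 1)) k) :
    n ≤ chainLength A γ k :=
  Nat.le_findGreatest hn h

theorem chainLength_mono (hA : ∀ n, Monotone (A (γ n))) : Monotone (chainLength A γ) :=
  fun _ _ hkl => le_chainLength (chainLength_le.trans hkl) fun _ hi =>
    hA _ hkl (mem_of_lt_chainLength hi)

theorem filter_lt_of_chain (hA : ∀ n, IsCoherentFiltrationAt A (γ n)) (hγ : Monotone γ)
    (hchain : ∀ i < n, γ i ∈ A (γ (i + 1)) k) {i : ℕ} (hi : i ≤ n) :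
    A (γ i) k = (A (γ n) k).filter (· < γ i) := by
  induction n, hi using Nat.le_induction with
  | base => exact (hA i).filter_lt_self.symm
  | succ n hin ih =>
    have hn := hchain n n.lt_succ_self
    rw [ih fun j hj => hchain j (hj.trans n.lt_succ_self),
      (hA (n + 1)).filter_lt _ ((hA (n + 1)).lt_of_mem hn) k hn,
      Finset.filter_lt_filter_lt (hγ hin)]

end chainLength

structure IsCofinalSeq (α : Ordinal) (γ : ℕ → Ordinal) : Prop where
  strictMono : StrictMono γ
  lt : ∀ n, γ n < α
  exists_lt : ∀ β < α, ∃ n, β < γ n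

theorem IsCoherentFiltrationAt.of_isCofinalSeq {A : Ordinal → ℕ → Finset Ordinal} {α : Ordinal}
    {γ : ℕ → Ordinal} (hγ : IsCofinalSeq α γ) (hA : ∀ n, IsCoherentFiltrationAt A (γ n))
    (hAα : ∀ k, A α k = A (γ (chainLength A γ k)) k) : IsCoherentFiltrationAt A α where
  lt_iff_exists_mem β := by
    refine ⟨fun hβ => ?_, fun ⟨k, hk⟩ => ?_⟩
    · obtain ⟨n, hn⟩ := hγ.exists_lt β hβ
      have hchain : ∀ᶠ k in atTop, ∀ i < n, γ i ∈ A (γ (i + 1)) k :=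
        (eventually_all_finite (Set.finite_Iio n)).2 fun i _ =>
          (hA (i + 1)).eventually_mem (hγ.strictMono i.lt_succ_self)
      obtain ⟨k, hnk, hchain, hβk⟩ :=
        ((eventually_ge_atTop n).and (hchain.and ((hA n).eventually_mem hn))).exists
      refine ⟨k, ?_⟩
      rw [filter_lt_of_chain hA hγ.strictMono.monotone (fun _ => mem_of_lt_chainLength)
        (le_chainLength hnk hchain)] at hβk
      exact hAα k ▸ Finset.mem_of_mem_filter β hβk
    · rw [hAα] at hk
      exact ((hA _).lt_of_mem hk).trans (hγ.lt _)
  monotone k l hkl := by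
    rw [hAα, hAα]
    calc A (γ (chainLength A γ k)) k
        ⊆ A (γ (chainLength A γ k)) l := (hA _).monotone hkl
      _ = (A (γ (chainLength A γ l)) l).filter (· < γ (chainLength A γ k)) :=
        filter_lt_of_chain hA hγ.strictMono.monotone (fun _ => mem_of_lt_chainLength)
          (chainLength_mono (fun n => (hA n).monotone) hkl)
      _ ⊆ A (γ (chainLength A γ l)) l := Finset.filter_subset _ _
  filter_lt β _ k hβ := by
    rw [hAα] at hβ ⊢
    exact (hA _).filter_lt β ((hA _).lt_of_mem hβ) k hβ

theorem exists_isCofinalSeq {α : Ordinal} (hα : α < ω₁) (hl : IsSuccLimit α) :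
    ∃ γ, IsCofinalSeq α γ := by
  have : Countable (Set.Iio α) := mk_le_aleph0_iff.1 <| by
    rwa [Cardinal.mk_Iio_ordinal, lift_le_aleph0, ← lt_aleph_one_iff, ← lt_ord, ord_aleph]
  have : Nonempty (Set.Iio α) := ⟨⟨0, hl.bot_lt⟩⟩
  have : NoMaxOrder (Set.Iio α) := ⟨fun β => ⟨⟨succ β, hl.succ_lt β.2⟩, lt_succ (β : Ordinal)⟩⟩
  obtain ⟨u, hu⟩ := exists_seq_tendsto (atTop : Filter (Set.Iio α))
  obtain ⟨φ, hφ, huφ⟩ := strictMono_subseq_of_tendsto_atTop hu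
  refine ⟨fun n => u (φ n), fun _ _ h => huφ h, fun n => (u (φ n)).2, fun β hβ => ?_⟩
  exact ((hu.comp hφ.tendsto_atTop).eventually_gt_atTop ⟨β, hβ⟩).exists

open Classical in
noncomputable def cofinalSeq (α : Ordinal) : ℕ → Ordinal :=
  if h : ∃ γ, IsCofinalSeq α γ then h.choose else fun _ => 0

theorem isCofinalSeq_cofinalSeq {α : Ordinal} (hα : α < ω₁) (hl : IsSuccLimit α) :
    IsCofinalSeq α (cofinalSeq α) := by
  have h := exists_isCofinalSeq hα hl
  rw [cofinalSeq, dif_pos h]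
  exact h.choose_spec

theorem cofinalSeq_lt {α : Ordinal} (hα : 0 < α) (n : ℕ) : cofinalSeq α n < α := by
  unfold cofinalSeq
  split_ifs with h
  exacts [h.choose_spec.lt n, hα]

noncomputable def coherentFiltration (α : Ordinal) : ℕ → Finset Ordinal :=
  Ordinal.limitRecOn α (fun _ => ∅) (fun β Aβ k => insert β (Aβ k)) fun α hα A k =>
    let B n := A (cofinalSeq α n) (cofinalSeq_lt hα.bot_lt n)
    B (Nat.findGreatest (fun n => ∀ i < n, cofinalSeq α i ∈ B (i + 1) k) k) k

theorem coherentFiltration_zero (k : ℕ) : coherentFiltration 0 k = ∅ := by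
  simp [coherentFiltration]

theorem coherentFiltration_add_one (β : Ordinal) (k : ℕ) :
    coherentFiltration (β + 1) k = insert β (coherentFiltration β k) := by
  simp [coherentFiltration]

theorem coherentFiltration_of_isSuccLimit {α : Ordinal} (hα : IsSuccLimit α) (k : ℕ) :
    coherentFiltration α k =
      coherentFiltration (cofinalSeq α (chainLength coherentFiltration (cofinalSeq α) k)) k := by
  rw [coherentFiltration, limitRecOn_limit _ _ _ _ hα]
  rfl

theorem isCoherentFiltrationAt_coherentFiltration {α : Ordinal} (hα : α < ω₁) :
    IsCoherentFiltrationAt coherentFiltration α := by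
  induction α using Ordinal.limitRecOn with
  | zero => exact .zero coherentFiltration_zero
  | add_one β ih => exact (ih ((lt_add_one β).trans hα)).add_one (coherentFiltration_add_one β)
  | limit α hl ih =>
    have hγ := isCofinalSeq_cofinalSeq hα hl
    exact .of_isCofinalSeq hγ (fun n => ih _ (hγ.lt n) ((hγ.lt n).trans hα))
      (coherentFiltration_of_isSuccLimit hl)

/-- There exists a coherent family of finite sets filtrating each ordinal below ω₁. -/
theorem coherent_finite_filtrations :
    ∃ A : Ordinal → ℕ → Finset Ordinal,
      ∀ α < (Cardinal.aleph 1).ord,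
        ((∀ β : Ordinal, (β < α ↔ ∃ k : ℕ, β ∈ A α k)) ∧
         (∀ k l : ℕ, k < l → A α k ⊆ A α l) ∧
         (∀ β < α, ∀ k : ℕ, β ∈ A α k →
            A β k = (A α k).filter (fun γ => γ < β))) := by
  refine ⟨coherentFiltration, fun α hα => ?_⟩
  have h := isCoherentFiltrationAt_coherentFiltration (ord_aleph 1 ▸ hα)
  exact ⟨h.lt_iff_exists_mem, fun k l hkl => h.monotone hkl.le, h.filter_lt⟩
end

section
/- Let F be a field of uncountable cardinality λ. There exists a sequence ⟨a_ν : ν < λ⟩ of elements of F such that whenever ⟨ν_{ij} : 1 ≤ i,j ≤ m⟩ is a finite family of pairwise distinct ordinals below λ, the m×m matrix with (i,j)-entry a_{ν_{ij}} has nonzero determinant. -/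
/-!
Take a transcendence basis of `F` over its prime ring. Since `F` is uncountable and algebraic
over the subring generated by the basis, the basis has cardinality `#F = λ`, so its elements can
be indexed by the ordinals below `λ`. A matrix whose entries are pairwise distinct elements of an
algebraically independent family is the image, under an injective evaluation map, of the matrix
of pairwise distinct variables, whose determinant is nonzero since it specializes to the identity.
-/

open Cardinal MvPolynomial Function Ordinal

universe u v w

theorem MvPolynomial.det_of_X_ne_zero {R σ n : Type*} [CommRing R] [Nontrivial R] [Fintype n]
    [DecidableEq n] {w : n × n → σ} (hw : Injective w) :
    (Matrix.of fun i j => (X (w (i, j)) : MvPolynomial σ R)).det ≠ 0 := by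
  let φ := eval (R := R) (extend w (fun p => if p.1 = p.2 then 1 else 0) 0)
  have hdiag : φ.mapMatrix (Matrix.of fun i j => X (w (i, j))) = 1 := by
    ext i j
    simp [φ, hw.extend_apply, Matrix.one_apply]
  apply ne_zero_of_map (f := φ)
  rw [RingHom.map_det, hdiag, Matrix.det_one]
  exact one_ne_zero

theorem AlgebraicIndependent.det_ne_zero {R A σ n : Type*} [CommRing R] [Nontrivial R]
    [CommRing A] [Algebra R A] [Fintype n] [DecidableEq n] {x : σ → A}
    (hx : AlgebraicIndependent R x) {w : n × n → σ} (hw : Injective w) :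
    (Matrix.of fun i j => x (w (i, j))).det ≠ 0 := by
  have hmap : (aeval x).mapMatrix (Matrix.of fun i j => (X (w (i, j)) : MvPolynomial σ R)) =
      Matrix.of fun i j => x (w (i, j)) := by
    ext i j
    simp
  rw [← hmap, ← AlgHom.map_det]
  exact (map_ne_zero_iff _ hx).2 (det_of_X_ne_zero hw)

theorem IsTranscendenceBasis.lift_cardinalMk_eq_of_countable {R : Type u} {E : Type v}
    {ι : Type w} [CommRing R] [IsDomain R] [Countable R] [Field E] [Algebra R E] {x : ι → E}
    (hx : IsTranscendenceBasis R x) (hE : ℵ₀ < #E) : lift.{v} #ι = lift.{w} #E := by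
  have hR : #R ≤ ℵ₀ := mk_le_aleph0
  have : FaithfulSMul R E :=
    (faithfulSMul_iff_algebraMap_injective R E).2 hx.1.algebraMap_injective
  -- otherwise `E` would be algebraic over the countable ring `R`, hence countable
  have : Nonempty ι := by
    by_contra h
    rw [not_nonempty_iff, hx.isEmpty_iff_isAlgebraic] at h
    have := (Algebra.IsAlgebraic.lift_cardinalMk_le_max R E).trans (max_le (by simp [hR]) le_rfl)
    exact (lift_le_aleph0.1 this).not_gt hE
  have hmk := hx.lift_cardinalMk_eq_max_lift
  rw [sup_assoc, sup_eq_right.2 ((lift_le_aleph0.2 hR).trans le_sup_right)] at hmk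
  have hι : ℵ₀ ≤ lift.{max u v} #ι := by
    have : ℵ₀ < lift.{max u w} #E := by simpa using hE
    rw [hmk, lt_max_iff, lt_self_iff_false, or_false] at this
    exact this.le
  rw [← lift_umax_eq.{w, v, u}, hmk, sup_eq_left.2 hι]

instance Subring.countable_bot {R : Type*} [Ring R] : Countable (⊥ : Subring R) := by
  have := Set.countable_range ((↑) : ℤ → R)
  rw [← Subring.coe_bot] at this
  exact this.to_subtype

theorem exists_algebraicIndependent_cardinalMk_eq {F : Type u} [Field F] (hF : ℵ₀ < #F) :
    ∃ s : Set F, AlgebraicIndependent (⊥ : Subring F) ((↑) : s → F) ∧ #s = #F := by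
  obtain ⟨s, hs⟩ := exists_isTranscendenceBasis (⊥ : Subring F) F
  exact ⟨s, hs.1, by simpa using hs.lift_cardinalMk_eq_of_countable hF⟩

/-- Over a field of uncountable cardinality λ there is a λ-sequence all of whose
square matrices with pairwise distinct ordinal indices are nonsingular. -/
theorem exists_long_seq_nonsingular_submatrices (F : Type*) [Field F] (lam : Cardinal)
    (hcard : Cardinal.mk F = lam) (hunc : Cardinal.aleph 1 ≤ lam) :
    ∃ a : Ordinal → F,
      ∀ (m : ℕ) (ν : Fin m → Fin m → Ordinal),
        (∀ i j, ν i j < lam.ord) →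
        Function.Injective (fun p : Fin m × Fin m => ν p.1 p.2) →
        (Matrix.of fun i j : Fin m => a (ν i j)).det ≠ 0 := by
  obtain ⟨s, hs, hsF⟩ :=
    exists_algebraicIndependent_cardinalMk_eq (hcard ▸ aleph0_lt_aleph_one.trans_le hunc)
  obtain ⟨e⟩ : Nonempty (lam.ord.ToType ≃ s) := by
    rw [← Cardinal.eq, mk_ord_toType, hsF, hcard]
  refine ⟨fun o => if h : o < lam.ord then e (ToType.mk ⟨o, h⟩) else 0,
    fun m ν hlt hν => ?_⟩
  simp only [dif_pos (hlt _ _)]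
  refine (hs.comp _ e.injective).det_ne_zero (w := fun p => ToType.mk ⟨ν p.1 p.2, hlt _ _⟩)
    fun p q hpq => hν ?_
  exact congrArg Subtype.val (ToType.mk.injective hpq)
end

section
/- Let ⟨E,Φ⟩ be a symmetric bilinear space over a field F, and let λ be an infinite cardinal with λ ≤ dim E. If for every subspace U ⊆ E with dim U ≥ λ one has dim U^⊥ < dim E, then dim E ≤ |F|^λ. -/
universe u

/-- The orthogonal complement of a subspace with respect to a bilinear form. -/
def ortho {F E : Type u} [Field F] [AddCommGroup E] [Module F E]
    (Φ : E →ₗ[F] E →ₗ[F] F) (U : Submodule F E) : Submodule F E where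
  carrier := {x | ∀ y ∈ U, Φ x y = 0}
  add_mem' := by
    intro a b ha hb y hy
    simp [map_add, ha y hy, hb y hy]
  zero_mem' := by
    intro y hy; simp
  smul_mem' := by
    intro c x hx y hy
    simp [hx y hy]

/-! Pairing against `λ` independent vectors maps `E` to `F^λ`, a space with at most `|F|^λ`
elements, and its kernel is the orthogonal complement of their span. By rank–nullity,
`dim E ≤ dim U^⊥ + |F|^λ`; since `dim U^⊥ < dim E` and `dim E` is infinite, `dim E ≤ |F|^λ`. -/

open Cardinal

theorem exists_linearIndepOn_mk_eq_of_le_rank {K V : Type u} [DivisionRing K] [AddCommGroup V]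
    [Module K V] {c : Cardinal.{u}} (hc : c ≤ Module.rank K V) :
    ∃ s : Set V, #s = c ∧ LinearIndepOn K id s := by
  obtain ⟨b, hb, hli⟩ := exists_set_linearIndependent K V
  obtain ⟨s, hsb, hs⟩ := Cardinal.le_mk_iff_exists_subset.mp (hc.trans_eq hb.symm)
  exact ⟨s, hs, LinearIndepOn.mono hli hsb⟩

theorem rank_le_rank_ker_add_mk_pow {K V ι : Type u} [Field K] [AddCommGroup V] [Module K V]
    (f : V →ₗ[K] ι → K) :
    Module.rank K V ≤ Module.rank K (LinearMap.ker f) + #K ^ #ι :=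
  calc Module.rank K V
      = Module.rank K (LinearMap.range f) + Module.rank K (LinearMap.ker f) :=
        (LinearMap.rank_range_add_rank_ker f).symm
    _ ≤ #(ι → K) + Module.rank K (LinearMap.ker f) := by
        gcongr
        exact (Submodule.rank_le _).trans (rank_le_card K _)
    _ = Module.rank K (LinearMap.ker f) + #K ^ #ι := by rw [add_comm, Cardinal.power_def]

theorem ortho_span_eq_ker_pi {F E : Type u} [Field F] [AddCommGroup E] [Module F E]
    (Φ : E →ₗ[F] E →ₗ[F] F) (s : Set E) :
    ortho Φ (Submodule.span F s) = LinearMap.ker (LinearMap.pi fun t : s => Φ.flip t) := by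
  ext x
  simp only [LinearMap.mem_ker, funext_iff, LinearMap.pi_apply, LinearMap.flip_apply,
    Pi.zero_apply, Subtype.forall]
  refine ⟨fun hx t ht => hx t (Submodule.subset_span ht), fun hx y hy => ?_⟩
  exact (Submodule.span_le (p := LinearMap.ker (Φ x)) |>.mpr hx) hy

theorem rank_le_rank_ortho_span_add {F E : Type u} [Field F] [AddCommGroup E] [Module F E]
    (Φ : E →ₗ[F] E →ₗ[F] F) (s : Set E) :
    Module.rank F E ≤ Module.rank F (ortho Φ (Submodule.span F s)) + #F ^ #s := by
  rw [ortho_span_eq_ker_pi]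
  exact rank_le_rank_ker_add_mk_pow _

theorem dim_le_of_lambda_gross_general {F E : Type u} [Field F] [AddCommGroup E] [Module F E]
    (Φ : E →ₗ[F] E →ₗ[F] F)
    (lam : Cardinal.{u}) (hlam : Cardinal.aleph0 ≤ lam) (hle : lam ≤ Module.rank F E)
    (hgross : ∀ U : Submodule F E, lam ≤ Module.rank F U →
      Module.rank F (ortho Φ U) < Module.rank F E) :
    Module.rank F E ≤ Cardinal.mk F ^ lam := by
  by_contra! hlt
  obtain ⟨s, hs, hli⟩ := exists_linearIndepOn_mk_eq_of_le_rank hle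
  have hspan : lam ≤ Module.rank F (Submodule.span F s) := (rank_span_set hli).trans hs |>.ge
  have hbound := rank_le_rank_ortho_span_add Φ s
  rw [hs] at hbound
  exact (add_lt_of_lt (hlam.trans hle) (hgross _ hspan) hlt).not_ge hbound

/-- |F|^λ is an upper bound for the dimension of a λ-Gross space over F. -/
theorem dim_le_of_lambda_gross {F E : Type u} [Field F] [AddCommGroup E] [Module F E]
    (Φ : E →ₗ[F] E →ₗ[F] F) (hsymm : ∀ x y, Φ x y = Φ y x)
    (lam : Cardinal.{u}) (hlam : Cardinal.aleph0 ≤ lam) (hle : lam ≤ Module.rank F E)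
    (hgross : ∀ U : Submodule F E, lam ≤ Module.rank F U →
      Module.rank F (ortho Φ U) < Module.rank F E) :
    Module.rank F E ≤ Cardinal.mk F ^ lam :=
  dim_le_of_lambda_gross_general Φ lam hlam hle hgross
end

section
/- Let E be a vector space with basis ⟨e_α : α < κ⟩ over a field F, with symmetric bilinear form Φ, and let λ ≤ κ be infinite. If κ > |F|^λ, then there exists a subset X ⊆ κ of cardinality κ and a family of κ-many linearly independent vectors of the form e_α − e_β (α, β ∈ X appropriately chosen) all lying in the orthogonal complement of span⟨e_β : β < λ⟩. In particular E is not a λ-Gross space. -/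
universe u

/-!
Colour each basis index `α` by the row `β ↦ Φ (e_α, e_β)` on `L`; there are at most `|F|^λ`
colours. Fix one representative `r α` in every colour class. Since `|F|^λ < κ` and `κ` is
infinite, the non-representatives can be enumerated injectively by all of `ι`, and
`e_α - e_{r α}` for non-representatives `α` are orthogonal to every `e_β`, `β ∈ L`, and
linearly independent, because each one involves its own basis vector `e_α` and otherwise only
representatives.
-/

open Cardinal Function Set Submodule

theorem Cardinal.exists_injective_notMem_of_mk_lt {α : Type*} [Infinite α] {s : Set α}
    (hs : #s < #α) : ∃ ψ : α → α, Function.Injective ψ ∧ ∀ a, ψ a ∉ s := by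
  obtain ⟨e⟩ := Cardinal.eq.mp (mk_compl_of_infinite s hs).symm
  exact ⟨fun a => e a, Subtype.val_injective.comp e.injective, fun a => (e a).2⟩

theorem Cardinal.mk_range_invFun_comp_le {α β : Type u} [Nonempty α] (f : α → β) :
    #(range (invFun f ∘ f)) ≤ #β :=
  (mk_le_mk_of_subset (range_comp_subset_range f (invFun f))).trans mk_range_le

theorem Module.Basis.linearIndependent_sub {R M ι κ : Type*} [CommRing R] [AddCommGroup M]
    [Module R M] (b : Module.Basis ι R M) {ψ ρ : κ → ι} (hψ : Function.Injective ψ)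
    (hψρ : ∀ x y, ψ x ≠ ρ y) : LinearIndependent R fun x => b (ψ x) - b (ρ x) := by
  classical
  -- the projection onto the coordinates in `range ψ` sends the family to `b ∘ ψ`
  let P : M →ₗ[R] M := b.constr R fun i => if i ∈ range ψ then b i else 0
  refine LinearIndependent.of_comp P ?_
  have hP : P ∘ (fun x => b (ψ x) - b (ρ x)) = b ∘ ψ := by
    ext x
    simp [P, b.constr_basis, hψρ]
  rw [hP]
  exact b.linearIndependent.comp ψ hψ

theorem sub_mem_ortho_span {F E : Type u} [Field F] [AddCommGroup E] [Module F E]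
    (Φ : E →ₗ[F] E →ₗ[F] F) {s : Set E} {x y : E} (h : ∀ z ∈ s, Φ x z = Φ y z) :
    x - y ∈ ortho Φ (span F s) := by
  intro z hz
  have hker : span F s ≤ LinearMap.ker (Φ (x - y)) :=
    span_le.mpr fun w hw => by simp [h w hw]
  exact hker hz

theorem Module.Basis.rank_span_image {R M ι : Type u} [DivisionRing R]
    [AddCommGroup M] [Module R M] (b : Module.Basis ι R M) (s : Set ι) :
    Module.rank R (span R (b '' s)) = #s := by
  have hli : LinearIndependent R fun i : s => b i :=
    b.linearIndependent.comp _ Subtype.val_injective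
  rw [image_eq_range, rank_span hli, mk_range_eq _ hli.injective]

theorem LinearIndependent.cardinal_le_rank_of_mem {R M ι : Type u} [Ring R] [Nontrivial R]
    [AddCommGroup M] [Module R M] {v : ι → M} (hv : LinearIndependent R v) {W : Submodule R M}
    (hW : ∀ x, v x ∈ W) : #ι ≤ Module.rank R W :=
  (LinearIndependent.of_comp W.subtype (v := fun x => (⟨v x, hW x⟩ : W)) hv).cardinal_le_rank

theorem not_lambda_gross_of_large_dim_general {F E : Type u} [Field F] [AddCommGroup E] [Module F E]
    {ι : Type u}
    (b : Module.Basis ι F E) (Φ : E →ₗ[F] E →ₗ[F] F)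
    (κ lam : Cardinal.{u}) (hκ : Cardinal.mk ι = κ)
    (hlam : Cardinal.aleph0 ≤ lam)
    (hbig : Cardinal.mk F ^ lam < κ)
    (L : Set ι) (hLcard : Cardinal.mk L = lam) :
    (∃ (X : Set ι) (g : X → E), Cardinal.mk X = κ ∧ LinearIndependent F g ∧
      (∀ x, ∃ α ∈ X, ∃ β ∈ X, g x = b α - b β) ∧
      (∀ x, g x ∈ ortho Φ (Submodule.span F (⇑b '' L)))) ∧
    ¬ (∀ U : Submodule F E, lam ≤ Module.rank F U →
        Module.rank F (ortho Φ U) < Module.rank F E) := by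
  have hcolours : #(L → F) < #ι := by rwa [← power_def, hLcard, hκ]
  have : Infinite ι := infinite_iff.mpr <| hlam.trans <|
    ((cantor' lam (one_lt_iff_nontrivial.mpr inferInstance)).trans (hbig.trans_eq hκ.symm)).le
  let colour : ι → L → F := fun α β => Φ (b α) (b β)
  let r := invFun colour ∘ colour
  have hr : ∀ α, colour (r α) = colour α := fun α => invFun_eq ⟨α, rfl⟩
  obtain ⟨ψ, hψ, hψr⟩ := exists_injective_notMem_of_mk_lt
    ((mk_range_invFun_comp_le colour).trans_lt hcolours)
  let g : ↥(univ : Set ι) → E := fun x => b (ψ x) - b (r (ψ x))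
  have hli : LinearIndependent F g :=
    b.linearIndependent_sub (hψ.comp Subtype.val_injective) fun x y h => hψr x ⟨_, h.symm⟩
  have horth : ∀ x, g x ∈ ortho Φ (span F (b '' L)) := by
    refine fun x => sub_mem_ortho_span Φ ?_
    rintro _ ⟨β, hβ, rfl⟩
    exact congrFun (hr (ψ x)).symm ⟨β, hβ⟩
  refine ⟨⟨univ, g, mk_univ.trans hκ, hli, fun x => ⟨_, trivial, _, trivial, rfl⟩, horth⟩,
    fun hGross => ?_⟩
  have hlt := hGross _ (b.rank_span_image L ▸ hLcard.ge)
  rw [← b.mk_eq_rank'', ← mk_univ] at hlt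
  exact hlt.not_ge (hli.cardinal_le_rank_of_mem horth)

/-- If a symmetric bilinear space of dimension κ > |F|^λ has a basis ⟨e_α : α < κ⟩, then
there is a set X of indices of size κ and κ-many linearly independent differences of basis
vectors, all orthogonal to the span of the first λ basis vectors; in particular the space
is not λ-Gross. -/
theorem not_lambda_gross_of_large_dim {F E : Type u} [Field F] [AddCommGroup E] [Module F E]
    {ι : Type u} [LinearOrder ι] [WellFoundedLT ι]
    (b : Module.Basis ι F E) (Φ : E →ₗ[F] E →ₗ[F] F) (hsymm : ∀ x y, Φ x y = Φ y x)
    (κ lam : Cardinal.{u}) (hκ : Cardinal.mk ι = κ)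
    (hlam : Cardinal.aleph0 ≤ lam) (hle : lam ≤ κ)
    (hbig : Cardinal.mk F ^ lam < κ)
    (L : Set ι) (hL : IsLowerSet L) (hLcard : Cardinal.mk L = lam) :
    (∃ (X : Set ι) (g : X → E), Cardinal.mk X = κ ∧ LinearIndependent F g ∧
      (∀ x, ∃ α ∈ X, ∃ β ∈ X, g x = b α - b β) ∧
      (∀ x, g x ∈ ortho Φ (Submodule.span F (⇑b '' L)))) ∧
    ¬ (∀ U : Submodule F E, lam ≤ Module.rank F U →
        Module.rank F (ortho Φ U) < Module.rank F E) :=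
  not_lambda_gross_of_large_dim_general b Φ κ lam hκ hlam hbig L hLcard
end

section
/- Let F be a finite field, κ a cardinal of uncountable cofinality, and suppose ⟨y_n : n < ω⟩ are vectors in a symmetric bilinear space E of dimension κ with basis ⟨e_α : α < κ⟩. For α < κ define f_α : ω → F by f_α(n) = Φ(e_α, y_n). If there is an infinite set A ⊆ ω such that for every α < κ and every a ∈ F, either A ⊆* f_α^{-1}{a} or A ∩ f_α^{-1}{a} is finite, then there are a ∈ F, n < ω, and X ⊆ κ of cardinality κ such that for all α ∈ X, f_α is constantly a on A \ n; consequently every difference e_α − e_β with α, β ∈ X lies in span⟨y_m : m ∈ A \ n⟩^⊥. -/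
universe u

/-!
A set `A ⊆ ℕ` that no fibre of `f_α` splits is almost contained in a single fibre, because the
finitely many fibres cover `A`. So each `α` determines a value `a` and a threshold `n` beyond
which `f_α` is `a` on `A`. There are only countably many pairs `(a, n)`, and `κ` has uncountable
cofinality, so one pair is shared by `κ` many `α`. Basis vectors sharing a pair have the same
`Φ`-value against every `y_m`, `m ∈ A \ n`, so their difference is orthogonal to the span of these.
-/

theorem Set.Infinite.exists_infinite_inter_fiber {α β : Type*} [Finite β] {A : Set α}
    (hA : A.Infinite) (f : α → β) : ∃ a, (A ∩ f ⁻¹' {a}).Infinite := by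
  by_contra! h
  refine hA ((Set.finite_iUnion h).subset fun m hm => ?_)
  exact Set.mem_iUnion.2 ⟨f m, hm, rfl⟩

theorem Set.Finite.exists_forall_ge_mem_of_diff {A S : Set ℕ} (h : (A \ S).Finite) :
    ∃ N, ∀ m ∈ A, N ≤ m → m ∈ S := by
  have hev : ∀ᶠ m in Filter.atTop, m ∉ A \ S :=
    Nat.cofinite_eq_atTop ▸ h.eventually_cofinite_notMem
  obtain ⟨N, hN⟩ := Filter.eventually_atTop.1 hev
  exact ⟨N, fun m hm hNm => by simpa [hm] using hN m hNm⟩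

theorem exists_eventually_const_of_unsplit {β : Type*} [Finite β] {A : Set ℕ}
    (hA : A.Infinite) (f : ℕ → β)
    (hunsplit : ∀ a, (A \ f ⁻¹' {a}).Finite ∨ (A ∩ f ⁻¹' {a}).Finite) :
    ∃ a N, ∀ m ∈ A, N ≤ m → f m = a := by
  obtain ⟨a, ha⟩ := hA.exists_infinite_inter_fiber f
  have hcofin : (A \ f ⁻¹' {a}).Finite := (hunsplit a).resolve_right ha
  exact ⟨a, hcofin.exists_forall_ge_mem_of_diff⟩

theorem Cardinal.exists_fiber_mk_eq_of_countable {ι β : Type u} [Countable β] {κ : Cardinal.{u}}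
    (hκ : Cardinal.mk ι = κ) (hcof : Cardinal.aleph0 < κ.ord.cof) (g : ι → β) :
    ∃ c, Cardinal.mk (g ⁻¹' {c}) = κ := by
  subst hκ
  have hι : Cardinal.aleph0 ≤ Cardinal.mk ι := hcof.le.trans (Ordinal.cof_ord_le _)
  exact Cardinal.infinite_pigeonhole g hι (Cardinal.mk_le_aleph0.trans_lt hcof)

theorem sub_mem_ortho_span_of_forall_eq {F E : Type u} [Field F] [AddCommGroup E] [Module F E]
    (Φ : E →ₗ[F] E →ₗ[F] F) {S : Set E} {x x' : E} {c : F}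
    (hx : ∀ v ∈ S, Φ x v = c) (hx' : ∀ v ∈ S, Φ x' v = c) :
    x - x' ∈ ortho Φ (Submodule.span F S) := fun v hv => by
  have hspan : Submodule.span F S ≤ LinearMap.ker (Φ (x - x')) :=
    Submodule.span_le.2 fun w hw => by simp [hx w hw, hx' w hw]
  exact hspan hv

theorem unsplit_stabilization_general {F E : Type u} [Field F] [Finite F]
    [AddCommGroup E] [Module F E] {ι : Type u}
    (b : Module.Basis ι F E) (Φ : E →ₗ[F] E →ₗ[F] F)
    (κ : Cardinal.{u}) (hκ : Cardinal.mk ι = κ)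
    (hcof : Cardinal.aleph0 < κ.ord.cof)
    (y : ℕ → E) (A : Set ℕ) (hA : A.Infinite)
    (hunsplit : ∀ α : ι, ∀ a : F,
      (A \ {n | Φ (b α) (y n) = a}).Finite ∨ (A ∩ {n | Φ (b α) (y n) = a}).Finite) :
    ∃ (a : F) (n : ℕ) (X : Set ι), Cardinal.mk X = κ ∧
      (∀ α ∈ X, ∀ m ∈ A, n ≤ m → Φ (b α) (y m) = a) ∧
      (∀ α ∈ X, ∀ β ∈ X,
        b α - b β ∈ ortho Φ (Submodule.span F (y '' {m | m ∈ A ∧ n ≤ m}))) := by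
  have hstable (α : ι) : ∃ p : F × ULift.{u} ℕ,
      ∀ m ∈ A, p.2.down ≤ m → Φ (b α) (y m) = p.1 := by
    obtain ⟨a, N, h⟩ :=
      exists_eventually_const_of_unsplit hA (fun m => Φ (b α) (y m)) (hunsplit α)
    exact ⟨(a, ⟨N⟩), h⟩
  choose g hg using hstable
  obtain ⟨⟨a, ⟨n⟩⟩, hX⟩ := Cardinal.exists_fiber_mk_eq_of_countable hκ hcof g
  have hconst : ∀ α ∈ g ⁻¹' {(a, ⟨n⟩)}, ∀ m ∈ A, n ≤ m → Φ (b α) (y m) = a := by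
    intro α hα
    have hgα : g α = (a, ⟨n⟩) := hα
    simpa only [hgα] using hg α
  refine ⟨a, n, g ⁻¹' {(a, ⟨n⟩)}, hX, hconst, fun α hα β hβ => ?_⟩
  exact sub_mem_ortho_span_of_forall_eq Φ (c := a)
    (Set.forall_mem_image.2 fun m hm => hconst α hα m hm.1 hm.2)
    (Set.forall_mem_image.2 fun m hm => hconst β hβ m hm.1 hm.2)

/-- Stabilization of an unsplit set: if an infinite A ⊆ ω is not split by any of the
partitions induced by f_α(n) = Φ(e_α, y_n) over a finite field, and κ has uncountable
cofinality, then on a set X of κ-many indices the functions are constantly a on A \ n,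
and all differences of basis vectors with indices in X are orthogonal to
span⟨y_m : m ∈ A \ n⟩. -/
theorem unsplit_stabilization {F E : Type u} [Field F] [Finite F]
    [AddCommGroup E] [Module F E] {ι : Type u}
    (b : Module.Basis ι F E) (Φ : E →ₗ[F] E →ₗ[F] F) (hsymm : ∀ x y, Φ x y = Φ y x)
    (κ : Cardinal.{u}) (hκ : Cardinal.mk ι = κ)
    (hcof : Cardinal.aleph0 < κ.ord.cof)
    (y : ℕ → E) (A : Set ℕ) (hA : A.Infinite)
    (hunsplit : ∀ α : ι, ∀ a : F,
      (A \ {n | Φ (b α) (y n) = a}).Finite ∨ (A ∩ {n | Φ (b α) (y n) = a}).Finite) :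
    ∃ (a : F) (n : ℕ) (X : Set ι), Cardinal.mk X = κ ∧
      (∀ α ∈ X, ∀ m ∈ A, n ≤ m → Φ (b α) (y m) = a) ∧
      (∀ α ∈ X, ∀ β ∈ X,
        b α - b β ∈ ortho Φ (Submodule.span F (y '' {m | m ∈ A ∧ n ≤ m}))) :=
  unsplit_stabilization_general b Φ κ hκ hcof y A hA hunsplit
end

section
/- Assume cof(ℳ) = ω₁, where ℳ is the ideal of meagre subsets of 2^ω. Then there exists a family ⟨r_α : α < ω₁⟩ of elements of 2^ω such that for every n and every meagre set A ⊆ (2^ω)^n there exists α < ω₁ such that for all α < α₁ < … < α_n < ω₁, the tuple ⟨r_{α₁},…,r_{α_n}⟩ ∉ A. -/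
/-!
Fix a cofinal family `⟨M_γ : γ < ω₁⟩` of meagre sets, transported to every power `(2^ω)^n`.
Choose `r_α` by recursion outside the following union of meagre sets, countable as `α < ω₁`:
for every `γ < α` and every finite list of earlier points `r_β` (`β < α`), whenever the section `B` of
`M_γ` at that prefix is meagre, avoid the points `x` at which the section of `B` is not meagre
(a meagre set by Kuratowski–Ulam). Then for `γ < α₁ < … < αₙ`, induction on the length of the
prefix shows that every section of `M_γ` at `(r_{α₁}, …, r_{αₖ})` is meagre; for `k = n` this
is a meagre subset of the one-point space `(2^ω)^0`, hence empty, so the tuple avoids `M_γ`.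
-/

/-- The cofinality of the meagre ideal on 2^ω: the least cardinality of a family of
meagre sets cofinal under inclusion among all meagre sets. -/
noncomputable def cofMeagre : Cardinal :=
  sInf { c | ∃ 𝓕 : Set (Set (ℕ → Bool)), Cardinal.mk 𝓕 = c ∧
    (∀ A ∈ 𝓕, IsMeagre A) ∧ ∀ A : Set (ℕ → Bool), IsMeagre A → ∃ B ∈ 𝓕, A ⊆ B }

open Set Topology Cardinal

universe u

section KuratowskiUlam

variable {X Y : Type*} [TopologicalSpace X] [TopologicalSpace Y] [SecondCountableTopology Y]

theorem IsClosed.isMeagre_setOf_not_isNowhereDense_preimage_prodMk {F : Set (X × Y)}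
    (hF : IsClosed F) (hFn : IsNowhereDense F) :
    IsMeagre {x | ¬ IsNowhereDense (Prod.mk x ⁻¹' F)} := by
  obtain ⟨hUo, hUd⟩ := isClosed_isNowhereDense_iff_compl.mp ⟨hF, hFn⟩
  obtain ⟨b, hbc, -, hb⟩ := TopologicalSpace.exists_countable_basis Y
  let W : Set Y → Set X := fun V => ⋃ y ∈ V, (·, y) ⁻¹' Fᶜ
  have hW : ∀ V ∈ b, V.Nonempty → IsOpen (W V) ∧ Dense (W V) := fun V hVb hVne =>
    ⟨isOpen_biUnion fun y _ => hUo.preimage (Continuous.prodMk_left y),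
      dense_iff_inter_open.mpr fun G hGo hGne => by
        obtain ⟨⟨x, y⟩, ⟨hx, hy⟩, hxy⟩ :=
          hUd.inter_open_nonempty _ (hGo.prod (hb.isOpen hVb)) (hGne.prod hVne)
        exact ⟨x, hx, mem_biUnion hy hxy⟩⟩
  have hbad :
      {x | ¬ IsNowhereDense (Prod.mk x ⁻¹' F)} ⊆ ⋃ V ∈ {V ∈ b | V.Nonempty}, (W V)ᶜ := by
    intro x hx
    by_contra hxW
    simp only [mem_iUnion, mem_compl_iff, not_exists, not_not] at hxW
    refine hx (isClosed_isNowhereDense_iff_compl.mpr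
      ⟨hUo.preimage (Continuous.prodMk_right x), hb.dense_iff.mpr fun V hVb hVne => ?_⟩).2
    obtain ⟨y, hyV, hxy⟩ := mem_iUnion₂.mp (hxW V ⟨hVb, hVne⟩)
    exact ⟨y, hyV, hxy⟩
  refine (isMeagre_biUnion (hbc.mono (sep_subset _ _)) fun V ⟨hVb, hVne⟩ => ?_).mono hbad
  obtain ⟨hWo, hWd⟩ := hW V hVb hVne
  exact (isClosed_isNowhereDense_iff_compl.mpr
    ⟨by rwa [compl_compl], by rwa [compl_compl]⟩).2.isMeagre

theorem IsMeagre.isMeagre_setOf_not_isMeagre_preimage_prodMk {A : Set (X × Y)}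
    (hA : IsMeagre A) : IsMeagre {x | ¬ IsMeagre (Prod.mk x ⁻¹' A)} := by
  obtain ⟨S, hS, hSc, hAS⟩ := isMeagre_iff_countable_union_isNowhereDense.mp hA
  refine (isMeagre_biUnion hSc fun s hs =>
    isClosed_closure.isMeagre_setOf_not_isNowhereDense_preimage_prodMk (hS s hs).closure).mono ?_
  intro x hx
  by_contra hxS
  simp only [mem_iUnion, mem_ofPred_eq, not_exists, not_not] at hxS
  refine hx ((isMeagre_biUnion hSc fun s hs => (hxS s hs).isMeagre).mono fun y hy => ?_)
  obtain ⟨s, hs, hys⟩ := mem_sUnion.mp (hAS hy)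
  exact mem_biUnion hs (subset_closure hys)

end KuratowskiUlam

section TupleSections

variable {X : Type*} [TopologicalSpace X]

def Homeomorph.finCons (X : Type*) [TopologicalSpace X] (n : ℕ) :
    X × (Fin n → X) ≃ₜ (Fin (n + 1) → X) where
  toEquiv := Fin.consEquiv fun _ => X
  continuous_toFun := by
    change Continuous fun p : X × (Fin n → X) => (Fin.cons p.1 p.2 : Fin (n + 1) → X)
    fun_prop
  continuous_invFun :=
    (continuous_apply 0).prodMk (continuous_pi fun i => continuous_apply i.succ)

def consSection {n : ℕ} (A : Set (Fin (n + 1) → X)) (x : X) : Set (Fin n → X) :=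
  {y | Fin.cons x y ∈ A}

theorem IsMeagre.isMeagre_setOf_not_isMeagre_consSection [SecondCountableTopology X] {n : ℕ}
    {A : Set (Fin (n + 1) → X)} (hA : IsMeagre A) :
    IsMeagre {x | ¬ IsMeagre (consSection A x)} := by
  exact (hA.preimage_of_isOpenMap (Homeomorph.finCons X n).continuous
    (Homeomorph.finCons X n).isOpenMap).isMeagre_setOf_not_isMeagre_preimage_prodMk

/-- `listSection B n [aₖ, …, a₁]` is the section of `B (n + k)` at the prefix `(a₁, …, aₖ)`;
the newest point comes first, so that extending the prefix is `List.cons`. -/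
def listSection (B : ∀ n, Set (Fin n → X)) : (n : ℕ) → List X → Set (Fin n → X)
  | n, [] => B n
  | n, a :: l => consSection (listSection B (n + 1) l) a

end TupleSections

theorem IsMeagre.eq_empty_of_subsingleton {X : Type*} [TopologicalSpace X] [Subsingleton X]
    {s : Set X} (hs : IsMeagre s) : s = ∅ := by
  refine eq_empty_of_forall_notMem fun x hx => ?_
  obtain ⟨y, hy⟩ := (dense_of_mem_residual hs).nonempty (h := ⟨x⟩)
  exact hy (Subsingleton.elim x y ▸ hx)

theorem WellFoundedLT.exists_forall_notMem {ι X : Type*} [LT ι] [WellFoundedLT ι] [Nonempty X]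
    (S : (ι → X) → ι → Set X) (hS : ∀ r r' α, (∀ β < α, r β = r' β) → S r α = S r' α)
    (hne : ∀ r α, (S r α)ᶜ.Nonempty) : ∃ r : ι → X, ∀ α, r α ∉ S r α := by
  classical
  let extend (α : ι) (rec : ∀ β < α, X) : ι → X := fun β =>
    if h : β < α then rec β h else Classical.arbitrary X
  let r : ι → X := wellFounded_lt.fix fun α rec => (hne (extend α rec) α).some
  refine ⟨r, fun α => ?_⟩
  have hr : r α = (hne (extend α fun β _ => r β) α).some := wellFounded_lt.fix_eq _ α
  rw [hS r (extend α fun β _ => r β) α fun β hβ => by simp [extend, hβ], hr]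
  exact (hne _ α).some_mem

theorem Set.Countable.setOf_forall_mem_list {ι : Type*} {s : Set ι} (hs : s.Countable) :
    {l : List ι | ∀ x ∈ l, x ∈ s}.Countable := by
  have := hs.to_subtype
  exact (countable_range (List.map Subtype.val)).mono fun l hl => CanLift.prf (β := List s) l hl

section AvoidingSequence

variable {X ι : Type*} [TopologicalSpace X] [Preorder ι] (T : ι → ∀ n, Set (Fin n → X))

def avoidSet (r : ι → X) (α : ι) : Set X :=
  ⋃ (n : ℕ) (γ ∈ Iio α) (l ∈ {l : List ι | ∀ β ∈ l, β < α})
    (_ : IsMeagre (listSection (T γ) (n + 1) (l.map r))),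
    {x | ¬ IsMeagre (consSection (listSection (T γ) (n + 1) (l.map r)) x)}

theorem avoidSet_congr {r r' : ι → X} {α : ι} (h : ∀ β < α, r β = r' β) :
    avoidSet T r α = avoidSet T r' α := by
  refine iUnion_congr fun n => iUnion₂_congr fun γ _ => iUnion₂_congr fun l hl => ?_
  rw [List.map_congr_left fun β hβ => h β (hl β hβ)]

theorem isMeagre_avoidSet [SecondCountableTopology X] (hι : ∀ α : ι, (Iio α).Countable)
    (r : ι → X) (α : ι) : IsMeagre (avoidSet T r α) :=
  isMeagre_iUnion fun _ => isMeagre_biUnion (hι α) fun _ _ =>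
    isMeagre_biUnion (hι α).setOf_forall_mem_list fun _ _ =>
      isMeagre_iUnion fun hB => hB.isMeagre_setOf_not_isMeagre_consSection

theorem comp_notMem_listSection {r : ι → X} (hr : ∀ α, r α ∉ avoidSet T r α)
    (n : ℕ) (γ : ι) (l : List ι) (g : Fin n → ι) (hg : StrictMono g) (hγ : ∀ i, γ < g i)
    (hl : ∀ β ∈ l, ∀ i, β < g i) (hB : IsMeagre (listSection (T γ) n (l.map r))) :
    r ∘ g ∉ listSection (T γ) n (l.map r) := by
  induction n generalizing l with
  | zero => simp [hB.eq_empty_of_subsingleton]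
  | succ n ih =>
    have hsection : IsMeagre (consSection (listSection (T γ) (n + 1) (l.map r)) (r (g 0))) := by
      by_contra hx
      refine hr (g 0) ?_
      simp only [avoidSet, mem_iUnion]
      exact ⟨n, γ, hγ 0, l, fun β hβ => hl β hβ 0, hB, hx⟩
    have hnext := ih (g 0 :: l) (Fin.tail g) (hg.comp Fin.strictMono_succ)
      (fun i => hγ i.succ) (by
        rintro β (_ | ⟨_, hβ⟩) i
        exacts [hg (Fin.succ_pos i), hl β hβ i.succ]) hsection
    rwa [← Fin.cons_self_tail g, Fin.comp_cons]

theorem exists_forall_comp_notMem [SecondCountableTopology X] [BaireSpace X] [Nonempty X]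
    [WellFoundedLT ι] (hι : ∀ α : ι, (Iio α).Countable) (hT : ∀ γ n, IsMeagre (T γ n)) :
    ∃ r : ι → X, ∀ n γ (g : Fin n → ι), StrictMono g → (∀ i, γ < g i) → r ∘ g ∉ T γ n := by
  obtain ⟨r, hr⟩ := WellFoundedLT.exists_forall_notMem (avoidSet T)
    (fun _ _ _ => avoidSet_congr T) fun r α =>
      (dense_of_mem_residual (isMeagre_avoidSet T hι r α)).nonempty
  exact ⟨r, fun n γ g hg hγ => comp_notMem_listSection T hr n γ [] g hg hγ (by simp) (hT γ n)⟩

end AvoidingSequence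

def IsCofinalMeagreFamily {ι Y : Type*} [TopologicalSpace Y] (M : ι → Set Y) : Prop :=
  (∀ i, IsMeagre (M i)) ∧ ∀ A, IsMeagre A → ∃ i, A ⊆ M i

theorem IsCofinalMeagreFamily.preimage_homeomorph {ι Y Z : Type*} [TopologicalSpace Y]
    [TopologicalSpace Z] {M : ι → Set Z} (hM : IsCofinalMeagreFamily M) (e : Y ≃ₜ Z) :
    IsCofinalMeagreFamily fun i => e ⁻¹' M i := by
  refine ⟨fun i => (hM.1 i).preimage_of_isOpenMap e.continuous e.isOpenMap, fun A hA => ?_⟩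
  obtain ⟨i, hi⟩ := hM.2 _ (hA.preimage_of_isOpenMap e.symm.continuous e.symm.isOpenMap)
  exact ⟨i, fun y hy => hi (by simpa using hy)⟩

theorem isCofinalMeagreFamily_empty {ι Y : Type*} [Nonempty ι] [TopologicalSpace Y]
    [Subsingleton Y] : IsCofinalMeagreFamily fun _ : ι => (∅ : Set Y) :=
  ⟨fun _ => IsMeagre.empty,
    fun _ hA => ⟨Classical.arbitrary ι, hA.eq_empty_of_subsingleton.subset⟩⟩

theorem exists_isCofinalMeagreFamily_of_cofMeagre_le {ι : Type u}
    (h : lift.{u} cofMeagre ≤ lift.{0} #ι) :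
    ∃ M : ι → Set (ℕ → Bool), IsCofinalMeagreFamily M := by
  obtain ⟨𝓕, h𝓕, hmeagre, hcofinal⟩ : cofMeagre ∈ _ :=
    csInf_mem (by
      exact ⟨_, {A | IsMeagre A}, rfl, fun _ hA => hA, fun A hA => ⟨A, hA, subset_rfl⟩⟩)
  obtain ⟨f⟩ := lift_mk_le'.mp (h𝓕 ▸ h)
  obtain ⟨B₀, hB₀, -⟩ := hcofinal ∅ IsMeagre.empty
  have : Nonempty 𝓕 := ⟨⟨B₀, hB₀⟩⟩
  refine ⟨fun i => ((Function.invFun f i : 𝓕) : Set (ℕ → Bool)),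
    fun i => hmeagre _ (Function.invFun f i).2, fun A hA => ?_⟩
  obtain ⟨B, hB, hAB⟩ := hcofinal A hA
  exact ⟨f ⟨B, hB⟩, by simpa [Function.leftInverse_invFun f.injective ⟨B, hB⟩] using hAB⟩

theorem nonempty_homeomorph_pi_cantor (κ : Type*) [Countable κ] [Nonempty κ] :
    Nonempty ((κ → ℕ → Bool) ≃ₜ (ℕ → Bool)) := by
  obtain ⟨_⟩ := nonempty_denumerable (κ × ℕ)
  exact ⟨Homeomorph.piCurry.symm.trans
    (Homeomorph.piCongrLeft (Y := fun _ => Bool) (Denumerable.eqv (κ × ℕ)))⟩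

theorem exists_isCofinalMeagreFamily_pi_cantor {ι : Type u} [Nonempty ι]
    (h : lift.{u} cofMeagre ≤ lift.{0} #ι) (n : ℕ) :
    ∃ T : ι → Set (Fin n → ℕ → Bool), IsCofinalMeagreFamily T := by
  cases n with
  | zero => exact ⟨_, isCofinalMeagreFamily_empty⟩
  | succ n =>
    obtain ⟨M, hM⟩ := exists_isCofinalMeagreFamily_of_cofMeagre_le h
    obtain ⟨e⟩ := nonempty_homeomorph_pi_cantor (Fin (n + 1))
    exact ⟨_, hM.preimage_homeomorph e⟩

theorem countable_Iio_lt_ord_aleph_one (α : {o : Ordinal.{u} // o < (aleph 1).ord}) :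
    (Iio α).Countable := by
  have : (Iio α.1).Countable := by
    rw [← le_aleph0_iff_set_countable, mk_Iio_ordinal, lift_le_aleph0, ← lt_aleph_one_iff,
      ← lt_ord]
    exact α.2
  exact this.preimage Subtype.val_injective

theorem mk_subtype_lt_ord_aleph_one : #{o : Ordinal.{u} // o < (aleph 1).ord} = ℵ₁ :=
  (mk_Iio_ordinal _).trans (by simp)

/-- If cof(ℳ) = ω₁ then there is an ω₁-sequence of reals in 2^ω such that every meagre
subset of (2^ω)^n is eventually avoided by all increasing n-tuples from the sequence. -/
theorem exists_sequence_avoiding_meagre_sets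
    (h : cofMeagre = Cardinal.aleph 1) :
    ∃ r : {o : Ordinal // o < (Cardinal.aleph 1).ord} → (ℕ → Bool),
      ∀ (n : ℕ) (A : Set (Fin n → (ℕ → Bool))), IsMeagre A →
        ∃ α : {o : Ordinal // o < (Cardinal.aleph 1).ord},
          ∀ g : Fin n → {o : Ordinal // o < (Cardinal.aleph 1).ord},
            StrictMono g → (∀ i, α < g i) → (fun i => r (g i)) ∉ A := by
  have : Nonempty {o : Ordinal // o < (aleph 1).ord} := ⟨⟨0, by simp [Ordinal.omega_pos]⟩⟩
  choose T hT using exists_isCofinalMeagreFamily_pi_cantor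
    (ι := {o : Ordinal // o < (aleph 1).ord}) (by rw [h, mk_subtype_lt_ord_aleph_one]; simp)
  obtain ⟨r, hr⟩ := exists_forall_comp_notMem (fun γ n => T n γ) countable_Iio_lt_ord_aleph_one
    fun γ n => (hT n).1 γ
  refine ⟨r, fun n A hA => ?_⟩
  obtain ⟨γ, hAγ⟩ := (hT n).2 A hA
  exact ⟨γ, fun g hg hγ hgA => hr n γ g hg hγ (hAγ hgA)⟩
end

section
/- There exists a family ⟨h_α : α < ω₁⟩ of one-to-one functions h_α : α → ω such that ω \ ran(h_α) is infinite for every α, and for all β < α < ω₁ the set {γ < β : h_β(γ) ≠ h_α(γ)} is finite. -/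
/-!
The family is built by recursion on `α < ω₁`, keeping each `h α` injective with coinfinite range
and almost equal to every earlier `h β` on `β`. At a successor `s + 1`, send `s` to a value outside
the range of `h s`. At a limit `α`, take a cofinal sequence `bₙ` and build injections `fₙ` on `bₙ`,
each extending the previous one and differing from `h bₙ` at finitely many places: the finitely
many collisions between `fₙ` and `h bₙ₊₁` are moved to fresh values, which exist since ranges are
coinfinite. At each stage one more value is reserved and never used later, so the union of the
`fₙ` still has coinfinite range.
-/

open Set Filter Function

def IsCoinfiniteInjOn {X Y : Type*} (f : X → Y) (s : Set X) : Prop :=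
  InjOn f s ∧ (f '' s)ᶜ.Infinite

theorem exists_seq_of_forall_exists_succ {α : Type*} (P : ℕ → α → Prop)
    (R : ℕ → α → α → Prop) {a : α} (h₀ : P 0 a) (step : ∀ n a, P n a → ∃ b, P (n + 1) b ∧ R n a b) :
    ∃ x : ℕ → α, ∀ n, P n (x n) ∧ R n (x n) (x (n + 1)) := by
  choose! s hsP hsR using step
  let x : ℕ → α := fun n => Nat.rec a s n
  have hP : ∀ n, P n (x n) := fun n => Nat.rec h₀ (fun n ih => hsP n _ ih) n
  exact ⟨x, fun n => ⟨hP n, hsR n _ (hP n)⟩⟩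

theorem exists_forall_eqOn_of_eqOn_succ {X Y : Type*} {S : ℕ → Set X} (hS : Monotone S)
    {F : ℕ → X → Y} (hF : ∀ n, EqOn (F (n + 1)) (F n) (S n)) :
    ∃ f : X → Y, ∀ n, EqOn f (F n) (S n) := by
  classical
  have hFle : ∀ m n, m ≤ n → EqOn (F n) (F m) (S m) := by
    intro m n hmn
    induction n, hmn using Nat.le_induction with
    | base => exact eqOn_refl _ _
    | succ n hmn ih => exact ((hF n).mono (hS hmn)).trans ih
  refine ⟨fun x => F (if h : ∃ n, x ∈ S n then Nat.find h else 0) x, fun n x hx => ?_⟩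
  have h : ∃ n, x ∈ S n := ⟨n, hx⟩
  simp only [dif_pos h]
  exact (hFle _ n (Nat.find_min' h hx) (Nat.find_spec h)).symm

section AlmostEqOn

variable {X Y : Type*} {s t : Set X} {f g : X → Y}

theorem eventuallyEq_cofinite_inf_principal_iff :
    f =ᶠ[cofinite ⊓ 𝓟 s] g ↔ {x | x ∈ s ∧ f x ≠ g x}.Finite := by
  rw [EventuallyEq, eventually_iff, mem_inf_principal, mem_cofinite]
  simp only [compl_ofPred, Classical.not_imp, mem_ofPred_eq]

theorem Filter.EventuallyEq.cofinite_inf_principal_mono (hfg : f =ᶠ[cofinite ⊓ 𝓟 t] g)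
    (hst : s ⊆ t) : f =ᶠ[cofinite ⊓ 𝓟 s] g :=
  hfg.filter_mono (by gcongr)

theorem Set.EqOn.eventuallyEq_cofinite_inf_principal (hfg : EqOn f g s) :
    f =ᶠ[cofinite ⊓ 𝓟 s] g :=
  (eventuallyEq_principal.2 hfg).filter_mono inf_le_right

theorem Set.Finite.eventuallyEq_cofinite_inf_principal (hs : s.Finite) (f g : X → Y) :
    f =ᶠ[cofinite ⊓ 𝓟 s] g :=
  eventuallyEq_cofinite_inf_principal_iff.2 (hs.subset fun _ hx => hx.1)

theorem Set.image_subset_image_union_image_ne (f g : X → Y) (s : Set X) :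
    f '' s ⊆ g '' s ∪ f '' {x | x ∈ s ∧ f x ≠ g x} := by
  rintro _ ⟨x, hx, rfl⟩
  by_cases hfg : f x = g x
  · exact .inl ⟨x, hx, hfg.symm⟩
  · exact .inr ⟨x, ⟨hx, hfg⟩, rfl⟩

theorem Set.Infinite.compl_image_of_eventuallyEq (hst : s ⊆ t) (hg : (g '' t)ᶜ.Infinite)
    (hfg : f =ᶠ[cofinite ⊓ 𝓟 s] g) : (f '' s)ᶜ.Infinite := by
  refine (hg.sdiff ((eventuallyEq_cofinite_inf_principal_iff.1 hfg).image f)).mono ?_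
  rintro v ⟨hvg, hvD⟩ hv
  rcases image_subset_image_union_image_ne f g s hv with hvgs | hvD'
  · exact hvg (image_mono hst hvgs)
  · exact hvD hvD'

end AlmostEqOn

section Piecewise

variable {X Y : Type*} {s u : Set X} [∀ x, Decidable (x ∈ s)] {f g h : X → Y}

theorem Set.InjOn.piecewise (hf : InjOn f (u ∩ s)) (hg : InjOn g (u \ s))
    (hfg : ∀ x ∈ u ∩ s, ∀ y ∈ u \ s, f x ≠ g y) : InjOn (s.piecewise f g) u := by
  intro x hx y hy hxy
  by_cases hxs : x ∈ s <;> by_cases hys : y ∈ s <;>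
    simp only [Set.piecewise, hxs, hys, if_true, if_false] at hxy
  · exact hf ⟨hx, hxs⟩ ⟨hy, hys⟩ hxy
  · exact (hfg x ⟨hx, hxs⟩ y ⟨hy, hys⟩ hxy).elim
  · exact (hfg y ⟨hy, hys⟩ x ⟨hx, hxs⟩ hxy.symm).elim
  · exact hg ⟨hx, hxs⟩ ⟨hy, hys⟩ hxy

theorem Filter.EventuallyEq.piecewise (hf : f =ᶠ[cofinite ⊓ 𝓟 (u ∩ s)] h)
    (hg : g =ᶠ[cofinite ⊓ 𝓟 (u \ s)] h) : s.piecewise f g =ᶠ[cofinite ⊓ 𝓟 u] h := by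
  rw [eventuallyEq_cofinite_inf_principal_iff] at hf hg ⊢
  refine (hf.union hg).subset fun x ⟨hx, hne⟩ => ?_
  by_cases hxs : x ∈ s
  · exact .inl ⟨⟨hx, hxs⟩, by rwa [piecewise_eq_of_mem _ _ _ hxs] at hne⟩
  · exact .inr ⟨⟨hx, hxs⟩, by rwa [piecewise_eq_of_notMem _ _ _ hxs] at hne⟩

theorem Set.image_piecewise_subset :
    s.piecewise f g '' u ⊆ f '' (u ∩ s) ∪ g '' (u \ s) := by
  rintro _ ⟨x, hx, rfl⟩
  by_cases hxs : x ∈ s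
  · exact .inl ⟨x, ⟨hx, hxs⟩, (piecewise_eq_of_mem _ _ _ hxs).symm⟩
  · exact .inr ⟨x, ⟨hx, hxs⟩, (piecewise_eq_of_notMem _ _ _ hxs).symm⟩

end Piecewise

section Extension

variable {X Y : Type*}

theorem Set.InjOn.exists_eventuallyEq_disjoint_image {s : Set X} {G : X → Y} {V : Set Y}
    (hG : InjOn G s) (hV : (s ∩ G ⁻¹' V).Finite) (hroom : (G '' s ∪ V)ᶜ.Infinite) :
    ∃ G', InjOn G' s ∧ G' =ᶠ[cofinite ⊓ 𝓟 s] G ∧ Disjoint (G' '' s) V := by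
  classical
  have : Nonempty Y := ⟨hroom.nonempty.some⟩
  set C := s ∩ G ⁻¹' V
  obtain ⟨φ, hφ, hφinj⟩ := hV.exists_injOn_of_encard_le (t := (G '' s ∪ V)ᶜ)
    (by rw [hroom.encard_eq]; exact le_top)
  have hCs : s ∩ C = C := inter_eq_right.2 inter_subset_left
  refine ⟨C.piecewise φ G, ?_, ?_, ?_⟩
  · refine InjOn.piecewise (by rwa [hCs]) (hG.mono sdiff_subset) ?_
    rintro x ⟨-, hxC⟩ y ⟨hy, -⟩ hxy
    exact hφ hxC (.inl ⟨y, hy, hxy.symm⟩)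
  · exact EventuallyEq.piecewise (by rw [hCs]; exact hV.eventuallyEq_cofinite_inf_principal _ _)
      EventuallyEq.rfl
  · refine disjoint_left.2 fun v hv hvV => ?_
    rcases image_piecewise_subset hv with ⟨x, ⟨-, hxC⟩, rfl⟩ | ⟨x, ⟨hx, hxC⟩, rfl⟩
    · exact hφ hxC (.inr hvV)
    · exact hxC ⟨hx, hvV⟩

theorem Set.InjOn.exists_extend_disjoint_image {S T : Set X} {f G : X → Y} {A : Set Y}
    (hST : S ⊆ T) (hf : InjOn f S) (hG : IsCoinfiniteInjOn G T) (hfG : f =ᶠ[cofinite ⊓ 𝓟 S] G)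
    (hA : A.Finite) (hfA : Disjoint (f '' S) A) :
    ∃ f', EqOn f' f S ∧ InjOn f' T ∧ f' =ᶠ[cofinite ⊓ 𝓟 T] G ∧ Disjoint (f' '' T) A := by
  classical
  set D := {x | x ∈ S ∧ f x ≠ G x}
  have hD : D.Finite := eventuallyEq_cofinite_inf_principal_iff.1 hfG
  have hfS : f '' S ⊆ G '' S ∪ f '' D := image_subset_image_union_image_ne f G S
  have hGTS : G '' (T \ S) = G '' T \ G '' S := hG.1.image_sdiff_subset hST
  -- Off `S`, `G` only collides with `f '' S ∪ A` at the finitely many values `f '' D ∪ A`.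
  have hcoll : G '' ((T \ S) ∩ G ⁻¹' (f '' S ∪ A)) ⊆ f '' D ∪ A := by
    rintro _ ⟨x, ⟨hx, hxV⟩, rfl⟩
    rcases hxV with hxf | hxA
    · rcases hfS hxf with hxS | hxD
      · exact absurd hxS (hGTS ▸ mem_image_of_mem G hx).2
      · exact .inl hxD
    · exact .inr hxA
  have hroom : (G '' (T \ S) ∪ (f '' S ∪ A))ᶜ.Infinite := by
    refine (hG.2.sdiff ((hD.image f).union hA)).mono ?_
    rintro v ⟨hvG, hvDA⟩ hv
    rcases hv with ⟨x, hx, rfl⟩ | hvf | hvA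
    · exact hvG ⟨x, hx.1, rfl⟩
    · rcases hfS hvf with hvGS | hvD
      · exact hvG (image_mono hST hvGS)
      · exact hvDA (.inl hvD)
    · exact hvDA (.inr hvA)
  obtain ⟨G', hG'inj, hG'G, hG'V⟩ := (hG.1.mono sdiff_subset).exists_eventuallyEq_disjoint_image
    (((hD.image f).union hA).subset hcoll |>.of_finite_image (hG.1.mono fun x hx => hx.1.1))
    hroom
  have hTS : T ∩ S = S := inter_eq_right.2 hST
  refine ⟨S.piecewise f G', piecewise_eqOn S f G', ?_, ?_, ?_⟩
  · refine InjOn.piecewise (by rwa [hTS]) hG'inj ?_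
    rintro x ⟨-, hx⟩ y hy hxy
    exact disjoint_left.1 hG'V ⟨y, hy, hxy.symm⟩ (.inl ⟨x, hx, rfl⟩)
  · exact EventuallyEq.piecewise (by rwa [hTS]) hG'G
  · refine disjoint_left.2 fun v hv hvA => ?_
    rcases image_piecewise_subset hv with hvf | hvG'
    · rw [hTS] at hvf
      exact disjoint_left.1 hfA hvf hvA
    · exact disjoint_left.1 hG'V hvG' (.inr hvA)

end Extension

section Amalgamation

variable {X Y : Type*} {S : ℕ → Set X} {G : ℕ → X → Y}

theorem exists_seq_extend_disjoint_image (hS : Monotone S)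
    (hG : ∀ n, IsCoinfiniteInjOn (G n) (S n))
    (hcoh : ∀ n, G n =ᶠ[cofinite ⊓ 𝓟 (S n)] G (n + 1)) :
    ∃ (F : ℕ → X → Y) (A : ℕ → Set Y), ∀ n,
      (InjOn (F n) (S n) ∧ F n =ᶠ[cofinite ⊓ 𝓟 (S n)] G n ∧ Disjoint (F n '' S n) (A n) ∧
        (A n).Finite) ∧ EqOn (F (n + 1)) (F n) (S n) ∧ A n ⊂ A (n + 1) := by
  refine (exists_seq_of_forall_exists_succ
    (fun n (p : (X → Y) × Set Y) => InjOn p.1 (S n) ∧ p.1 =ᶠ[cofinite ⊓ 𝓟 (S n)] G n ∧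
      Disjoint (p.1 '' S n) p.2 ∧ p.2.Finite)
    (fun n p q => EqOn q.1 p.1 (S n) ∧ p.2 ⊂ q.2)
    (a := (G 0, ∅)) ⟨(hG 0).1, .rfl, disjoint_empty _, finite_empty⟩ ?_).elim
    fun p hp => ⟨fun n => (p n).1, fun n => (p n).2, hp⟩
  rintro n ⟨f, A⟩ ⟨hf, hfG, hfA, hA⟩
  have hfG' : f =ᶠ[cofinite ⊓ 𝓟 (S n)] G (n + 1) := hfG.trans (hcoh n)
  obtain ⟨a, haf, haA⟩ :=
    ((hG (n + 1)).2.compl_image_of_eventuallyEq (hS n.le_succ) hfG' |>.sdiff hA).nonempty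
  obtain ⟨f', hf'f, hf'inj, hf'G, hf'A⟩ := hf.exists_extend_disjoint_image (hS n.le_succ)
    (hG (n + 1)) hfG' (hA.insert a) (disjoint_insert_right.2 ⟨haf, hfA⟩)
  exact ⟨(f', insert a A), ⟨hf'inj, hf'G, hf'A, hA.insert a⟩, hf'f, ssubset_insert haA⟩

theorem exists_isCoinfiniteInjOn_iUnion (hS : Monotone S)
    (hG : ∀ n, IsCoinfiniteInjOn (G n) (S n))
    (hcoh : ∀ n, G n =ᶠ[cofinite ⊓ 𝓟 (S n)] G (n + 1)) :
    ∃ f, IsCoinfiniteInjOn f (⋃ n, S n) ∧ ∀ n, f =ᶠ[cofinite ⊓ 𝓟 (S n)] G n := by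
  obtain ⟨F, A, hFA⟩ := exists_seq_extend_disjoint_image hS hG hcoh
  obtain ⟨f, hf⟩ := exists_forall_eqOn_of_eqOn_succ hS fun n => (hFA n).2.1
  have hAmono : StrictMono A := strictMono_nat_of_lt_succ fun n => (hFA n).2.2
  refine ⟨f, ⟨?_, ?_⟩, fun n => (hf n).eventuallyEq_cofinite_inf_principal.trans (hFA n).1.2.1⟩
  · intro x hx y hy hxy
    obtain ⟨m, hxm⟩ := mem_iUnion.1 hx
    obtain ⟨n, hyn⟩ := mem_iUnion.1 hy
    exact (hf _).injOn_iff.2 (hFA (max m n)).1.1 (hS (le_max_left m n) hxm)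
      (hS (le_max_right m n) hyn) hxy
  · refine (infinite_iUnion hAmono.injective).mono ?_
    rintro v hv ⟨x, hx, rfl⟩
    obtain ⟨m, hvm⟩ := mem_iUnion.1 hv
    obtain ⟨n, hxn⟩ := mem_iUnion.1 hx
    have hxk : x ∈ S (max m n) := hS (le_max_right m n) hxn
    exact disjoint_left.1 (hFA _).1.2.2.1 ⟨x, hxk, (hf _ hxk).symm⟩
      (hAmono.monotone (le_max_left m n) hvm)

end Amalgamation

theorem exists_coherent_family_of_forall_extend {ι X : Type*} [Preorder ι] [WellFoundedLT ι]
    [Nonempty X] (c : ι) (P : ι → X → Prop) (R : ι → X → X → Prop)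
    (ext : ∀ α < c, ∀ x : ι → X, (∀ β < α, P β (x β)) →
      (∀ γ β, γ < β → β < α → R γ (x γ) (x β)) → ∃ y, P α y ∧ ∀ β < α, R β (x β) y) :
    ∃ x : ι → X, (∀ α < c, P α (x α)) ∧ ∀ β α, β < α → α < c → R β (x β) (x α) := by
  classical
  let x : ι → X := wellFounded_lt.fix fun α rec =>
    if h : ∃ y, P α y ∧ ∀ β (hβ : β < α), R β (rec β hβ) y then h.choose
    else Classical.arbitrary X
  have hx (α : ι) : x α = if h : ∃ y, P α y ∧ ∀ β < α, R β (x β) y then h.choose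
      else Classical.arbitrary X :=
    wellFounded_lt.fix_eq _ α
  have hxP (α : ι) : α < c → P α (x α) ∧ ∀ β < α, R β (x β) (x α) := by
    induction α using WellFoundedLT.induction with
    | _ α ih =>
      intro hα
      have h := ext α hα x (fun β hβ => (ih β hβ (hβ.trans hα)).1)
        (fun γ β hγ hβ => (ih β hβ (hβ.trans hα)).2 γ hγ)
      rw [hx α, dif_pos h]
      exact h.choose_spec
  exact ⟨x, fun α hα => (hxP α hα).1, fun β α h hα => (hxP α hα).2 β h⟩

namespace Ordinal

theorem countable_Iio_of_lt_ord_aleph_one {α : Ordinal} (hα : α < (Cardinal.aleph 1).ord) :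
    (Iio α).Countable := by
  rw [← Cardinal.le_aleph0_iff_set_countable, Cardinal.mk_Iio_ordinal, Cardinal.lift_le_aleph0]
  exact Cardinal.lt_aleph_one_iff.1 (Cardinal.lt_ord.1 hα)

theorem exists_monotone_iUnion_Iio_eq {α : Ordinal} (hα : α < (Cardinal.aleph 1).ord)
    (hlim : Order.IsSuccLimit α) :
    ∃ b : ℕ → Ordinal, Monotone b ∧ (∀ n, b n < α) ∧ ⋃ n, Iio (b n) = Iio α := by
  have : Countable (Iio α) := (countable_Iio_of_lt_ord_aleph_one hα).to_subtype
  have : Nonempty (Iio α) := ⟨⟨0, hlim.bot_lt⟩⟩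
  have := (atTop_countable_basis (α := Iio α)).isCountablyGenerated
  obtain ⟨b, hbmono, hb⟩ := exists_seq_monotone_tendsto_atTop_atTop (Iio α)
  refine ⟨fun n => b n, fun m n h => hbmono h, fun n => (b n).2, ?_⟩
  refine (iUnion_subset fun n => Iio_subset_Iio (b n).2.le).antisymm fun γ hγ => ?_
  obtain ⟨n, hn⟩ := (tendsto_atTop.1 hb ⟨Order.succ γ, hlim.succ_lt hγ⟩).exists
  exact mem_iUnion.2 ⟨n, (Order.lt_succ γ).trans_le hn⟩

variable {g : Ordinal → Ordinal → ℕ}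

theorem exists_coherent_extension_succ {s : Ordinal} (hg : IsCoinfiniteInjOn (g s) (Iio s))
    (hco : ∀ β ≤ s, g β =ᶠ[cofinite ⊓ 𝓟 (Iio β)] g s) :
    ∃ f, IsCoinfiniteInjOn f (Iio (Order.succ s)) ∧
      ∀ β < Order.succ s, g β =ᶠ[cofinite ⊓ 𝓟 (Iio β)] f := by
  obtain ⟨n, hn⟩ := hg.2.nonempty
  have hfg : EqOn (update (g s) s n) (g s) (Iio s) := fun x hx => update_of_ne hx.ne _ _
  refine ⟨update (g s) s n, ⟨?_, ?_⟩, fun β hβ => ?_⟩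
  · rw [Order.Iio_succ_eq_insert, injOn_insert self_notMem_Iio, hfg.image_eq, update_self]
    exact ⟨hfg.injOn_iff.2 hg.1, hn⟩
  · rw [Order.Iio_succ_eq_insert, image_insert_eq, hfg.image_eq, update_self, insert_eq,
      compl_union, inter_comm]
    exact hg.2.sdiff (finite_singleton n)
  · rw [Order.lt_succ_iff] at hβ
    exact (hco β hβ).trans (hfg.mono (Iio_subset_Iio hβ)).symm.eventuallyEq_cofinite_inf_principal

theorem exists_coherent_extension_of_isSuccLimit {α : Ordinal} (hα : α < (Cardinal.aleph 1).ord)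
    (hlim : Order.IsSuccLimit α) (hg : ∀ β < α, IsCoinfiniteInjOn (g β) (Iio β))
    (hco : ∀ γ β, γ ≤ β → β < α → g γ =ᶠ[cofinite ⊓ 𝓟 (Iio γ)] g β) :
    ∃ f, IsCoinfiniteInjOn f (Iio α) ∧ ∀ β < α, g β =ᶠ[cofinite ⊓ 𝓟 (Iio β)] f := by
  obtain ⟨b, hbmono, hbα, hcover⟩ := exists_monotone_iUnion_Iio_eq hα hlim
  obtain ⟨f, hf, hfg⟩ := exists_isCoinfiniteInjOn_iUnion (S := fun n => Iio (b n))
    (fun m n h => Iio_subset_Iio (hbmono h)) (fun n => hg _ (hbα n))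
    (fun n => hco _ _ (hbmono n.le_succ) (hbα _))
  refine ⟨f, hcover ▸ hf, fun β hβ => ?_⟩
  obtain ⟨n, hn⟩ := mem_iUnion.1 (hcover.symm ▸ hβ : β ∈ ⋃ n, Iio (b n))
  exact (hco β (b n) hn.le (hbα n)).trans
    ((hfg n).symm.cofinite_inf_principal_mono (Iio_subset_Iio hn.le))

theorem exists_coherent_extension {α : Ordinal} (hα : α < (Cardinal.aleph 1).ord)
    (hg : ∀ β < α, IsCoinfiniteInjOn (g β) (Iio β))
    (hco : ∀ γ β, γ < β → β < α → g γ =ᶠ[cofinite ⊓ 𝓟 (Iio γ)] g β) :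
    ∃ f, IsCoinfiniteInjOn f (Iio α) ∧ ∀ β < α, g β =ᶠ[cofinite ⊓ 𝓟 (Iio β)] f := by
  have hco' (γ β : Ordinal) (hγβ : γ ≤ β) (hβ : β < α) : g γ =ᶠ[cofinite ⊓ 𝓟 (Iio γ)] g β := by
    rcases hγβ.eq_or_lt with rfl | hγβ
    exacts [.rfl, hco γ β hγβ hβ]
  rcases zero_or_succ_or_isSuccLimit α with rfl | ⟨s, rfl⟩ | hlim
  · refine ⟨g 0, ?_, fun β hβ => absurd hβ not_lt_zero⟩
    rw [← bot_eq_zero, Iio_bot]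
    exact ⟨injOn_empty _, by simp [infinite_univ]⟩
  · exact exists_coherent_extension_succ (hg s (Order.lt_succ s))
      fun β hβ => hco' β s hβ (Order.lt_succ s)
  · exact exists_coherent_extension_of_isSuccLimit hα hlim hg hco'

end Ordinal

/-- Todorcevic's coherent sequence: there is a family ⟨h_α : α < ω₁⟩ of injections
h_α : α → ω with coinfinite range, coherent modulo finite. -/
theorem exists_coherent_injections :
    ∃ h : {o : Ordinal // o < (Cardinal.aleph 1).ord} → Ordinal → ℕ,
      (∀ α, Set.InjOn (h α) (Set.Iio α.val)) ∧
      (∀ α, ((h α '' Set.Iio α.val)ᶜ : Set ℕ).Infinite) ∧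
      (∀ α β : {o : Ordinal // o < (Cardinal.aleph 1).ord}, β.val < α.val →
        {γ : Ordinal | γ < β.val ∧ h β γ ≠ h α γ}.Finite) := by
  obtain ⟨h, hinj, hcoh⟩ := exists_coherent_family_of_forall_extend (Cardinal.aleph 1).ord
    (fun α f => IsCoinfiniteInjOn f (Iio α)) (fun β f g => f =ᶠ[cofinite ⊓ 𝓟 (Iio β)] g)
    fun _ hα _ hg hco => Ordinal.exists_coherent_extension hα hg hco
  exact ⟨fun α => h α, fun α => (hinj α α.2).1, fun α => (hinj α α.2).2,
    fun α β hβα => eventuallyEq_cofinite_inf_principal_iff.1 (hcoh β α hβα α.2)⟩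
end

section
/- Let λ be an infinite cardinal. There exists a family ⟨A^α_γ : γ < λ⁺, α < λ⁺⁺⟩ of sets of size ≤ λ such that for all α, β < λ⁺⁺ and γ, δ < λ⁺: (1) ⟨A^α_γ : γ < λ⁺⟩ is increasing and continuous with union α and A^α_0 = ∅; (2) if γ < δ then A^α_γ ⊆ A^α_δ; (3) if α < β and α ∈ A^β_γ then A^α_γ = A^β_γ ∩ α. -/
/-!
The filtrations are built by recursion on `α`. Given coherent filtrations `A β` for all `β < α`,
pick an index family: sets `D γ ⊆ α`, increasing and continuous in `γ`, of size `≤ λ`, such that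
`β ∈ A β' γ` whenever `β < β'` both lie in `D γ`, and such that
`A α γ := ⋃ β ∈ D γ, {β} ∪ A β γ` exhausts `α`. Coherence below `α` then makes each `A β γ` with
`β ∈ D γ` an initial segment of `A α γ`, which is coherence at `α`.

To find `D`, enumerate `α` as `s j`, `j < λ⁺` (possible as `|α| ≤ λ⁺`), and let `s j` enter
`D γ` once `γ` exceeds `j` and every level at which `s j` and an earlier `s k` enter each other's
filtrations; regularity of `λ⁺` keeps this threshold below `λ⁺`.
-/

namespace CoherentFiltration

open Cardinal Ordinal Set Order

universe u

structure IsFiltration (lam : Cardinal.{0}) (α : Ordinal.{0}) (F : Ordinal.{0} → Set Ordinal.{0}) :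
    Prop where
  card_le : ∀ γ < (succ lam).ord, #(F γ) ≤ lift.{1} lam
  subset_Iio : ∀ γ < (succ lam).ord, F γ ⊆ Iio α
  zero : F 0 = ∅
  iUnion_eq : ⋃ γ ∈ Iio (succ lam).ord, F γ = Iio α
  mono : ∀ γ δ : Ordinal, γ < δ → δ < (succ lam).ord → F γ ⊆ F δ
  continuous : ∀ γ < (succ lam).ord, IsSuccLimit γ → F γ = ⋃ δ ∈ Iio γ, F δ

def IsCoherentAt (lam : Cardinal.{0}) (A : Ordinal.{0} → Ordinal.{0} → Set Ordinal.{0})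
    (α : Ordinal.{0}) : Prop :=
  ∀ β γ : Ordinal, γ < (succ lam).ord → β < α → β ∈ A α γ → A β γ = A α γ ∩ Iio β

def glue (A : Ordinal.{0} → Ordinal.{0} → Set Ordinal.{0}) (D : Ordinal.{0} → Set Ordinal.{0})
    (γ : Ordinal.{0}) : Set Ordinal.{0} :=
  ⋃ β ∈ D γ, insert β (A β γ)

structure IsIndexFamily (lam : Cardinal.{0}) (A : Ordinal.{0} → Ordinal.{0} → Set Ordinal.{0})
    (α : Ordinal.{0}) (D : Ordinal.{0} → Set Ordinal.{0}) : Prop where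
  subset_Iio : ∀ γ, D γ ⊆ Iio α
  mono : Monotone D
  zero : D 0 = ∅
  continuous : ∀ γ, IsSuccLimit γ → D γ ⊆ ⋃ δ ∈ Iio γ, D δ
  card_le : ∀ γ < (succ lam).ord, #(D γ) ≤ lift.{1} lam
  exists_mem_glue : ∀ ξ < α, ∃ γ < (succ lam).ord, ξ ∈ glue A D γ
  mem_of_lt : ∀ γ < (succ lam).ord, ∀ β ∈ D γ, ∀ β' ∈ D γ, β < β' → β ∈ A β' γ

variable {lam : Cardinal.{0}} {A A' : Ordinal.{0} → Ordinal.{0} → Set Ordinal.{0}}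
  {F : Ordinal.{0} → Set Ordinal.{0}} {D : Ordinal.{0} → Set Ordinal.{0}} {α β γ δ : Ordinal.{0}}

theorem IsFiltration.subset_of_le (hF : IsFiltration lam α F) (h : γ ≤ δ)
    (hδ : δ < (succ lam).ord) : F γ ⊆ F δ := by
  rcases h.eq_or_lt with rfl | h
  · rfl
  · exact hF.mono γ δ h hδ

theorem IsFiltration.exists_mem (hF : IsFiltration lam α F) (h : β < α) :
    ∃ γ < (succ lam).ord, β ∈ F γ := by
  have hβ : β ∈ ⋃ γ ∈ Iio (succ lam).ord, F γ := hF.iUnion_eq ▸ h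
  simpa using hβ

theorem mem_glue : β ∈ glue A D γ ↔ ∃ β' ∈ D γ, β = β' ∨ β ∈ A β' γ := by
  simp [glue]

theorem glue_congr (hD : ∀ γ, D γ ⊆ Iio α) (h : ∀ β < α, A β = A' β) : glue A D = glue A' D := by
  funext γ
  exact iUnion₂_congr fun β hβ => by rw [h β (hD γ hβ)]

theorem IsIndexFamily.congr (hD : IsIndexFamily lam A α D) (h : ∀ β < α, A β = A' β) :
    IsIndexFamily lam A' α D where
  __ := hD
  exists_mem_glue := by simpa only [← glue_congr hD.subset_Iio h] using hD.exists_mem_glue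
  mem_of_lt γ hγ β hβ β' hβ' hlt := by
    simpa only [← h β' (hD.subset_Iio γ hβ')] using hD.mem_of_lt γ hγ β hβ β' hβ' hlt

section Glue

variable (hF : ∀ β < α, IsFiltration lam β (A β)) (hD : IsIndexFamily lam A α D)
include hF hD

theorem glue_subset_Iio (hγ : γ < (succ lam).ord) : glue A D γ ⊆ Iio α := by
  intro ξ hξ
  obtain ⟨β, hβ, rfl | hξ⟩ := mem_glue.1 hξ
  · exact hD.subset_Iio γ hβ
  · have hβα : β < α := hD.subset_Iio γ hβ
    exact ((hF β hβα).subset_Iio γ hγ hξ).trans hβα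

theorem glue_subset_glue (h : γ ≤ δ) (hδ : δ < (succ lam).ord) : glue A D γ ⊆ glue A D δ := by
  intro ξ hξ
  obtain ⟨β, hβ, hξ⟩ := mem_glue.1 hξ
  refine mem_glue.2 ⟨β, hD.mono h hβ, hξ.imp_right fun hξ => ?_⟩
  exact (hF β (hD.subset_Iio γ hβ)).subset_of_le h hδ hξ

theorem glue_subset_iUnion_of_isSuccLimit (hγ : γ < (succ lam).ord) (hlim : IsSuccLimit γ) :
    glue A D γ ⊆ ⋃ δ ∈ Iio γ, glue A D δ := by
  intro ξ hξ
  obtain ⟨β, hβ, hξ⟩ := mem_glue.1 hξ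
  obtain ⟨δ₀, hδ₀, hβ₀⟩ := mem_iUnion₂.1 (hD.continuous γ hlim hβ)
  have hFβ := hF β (hD.subset_Iio γ hβ)
  rcases hξ with rfl | hξ
  · exact mem_biUnion hδ₀ (mem_glue.2 ⟨ξ, hβ₀, .inl rfl⟩)
  · rw [hFβ.continuous γ hγ hlim] at hξ
    obtain ⟨δ₁, hδ₁, hξ⟩ := mem_iUnion₂.1 hξ
    have hδ : max δ₀ δ₁ < γ := max_lt hδ₀ hδ₁
    refine mem_biUnion hδ (mem_glue.2 ⟨β, hD.mono (le_max_left _ _) hβ₀, .inr ?_⟩)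
    exact hFβ.subset_of_le (le_max_right _ _) (hδ.trans hγ) hξ

theorem mk_glue_le (hlam : ℵ₀ ≤ lam) (hγ : γ < (succ lam).ord) :
    #(glue A D γ) ≤ lift.{1} lam := by
  have hlam' : ℵ₀ ≤ lift.{1} lam := aleph0_le_lift.2 hlam
  have hinsert : ∀ β ∈ D γ, #(insert β (A β γ) : Set Ordinal) ≤ lift.{1} lam := fun β hβ =>
    calc #(insert β (A β γ) : Set Ordinal) ≤ #(A β γ) + 1 := mk_insert_le
      _ ≤ lift.{1} lam + 1 := add_le_add_left ((hF β (hD.subset_Iio γ hβ)).card_le γ hγ) 1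
      _ = lift.{1} lam := add_one_eq hlam'
  calc #(glue A D γ) ≤ #(D γ) * ⨆ β : D γ, #(insert β.1 (A β γ) : Set Ordinal) :=
        mk_biUnion_le _ _
    _ ≤ lift.{1} lam * lift.{1} lam :=
        mul_le_mul' (hD.card_le γ hγ) (ciSup_le' fun β => hinsert β β.2)
    _ = lift.{1} lam := mul_eq_self hlam'

theorem isFiltration_glue (hlam : ℵ₀ ≤ lam) : IsFiltration lam α (glue A D) where
  card_le _ := mk_glue_le hF hD hlam
  subset_Iio _ := glue_subset_Iio hF hD
  zero := by simp [glue, hD.zero]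
  iUnion_eq := by
    refine (iUnion₂_subset fun γ (hγ : γ ∈ Iio _) => glue_subset_Iio hF hD hγ).antisymm
      fun ξ hξ => ?_
    obtain ⟨γ, hγ, hξ⟩ := hD.exists_mem_glue ξ hξ
    exact mem_biUnion hγ hξ
  mono γ δ h hδ := glue_subset_glue hF hD h.le hδ
  continuous γ hγ hlim := (glue_subset_iUnion_of_isSuccLimit hF hD hγ hlim).antisymm
    (iUnion₂_subset fun δ hδ => glue_subset_glue hF hD (le_of_lt hδ) hγ)

theorem glue_inter_Iio_of_mem (hC : ∀ β < α, IsCoherentAt lam A β) (hγ : γ < (succ lam).ord)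
    (hβ : β ∈ D γ) : glue A D γ ∩ Iio β = A β γ := by
  have hβα : β < α := hD.subset_Iio γ hβ
  refine Subset.antisymm (fun ξ ⟨hξ, hξβ⟩ => ?_) fun ξ hξ =>
    ⟨mem_glue.2 ⟨β, hβ, .inr hξ⟩, (hF β hβα).subset_Iio γ hγ hξ⟩
  obtain ⟨β', hβ', hξ'⟩ := mem_glue.1 hξ
  have hβ'α : β' < α := hD.subset_Iio γ hβ'
  rcases lt_trichotomy β' β with hlt | rfl | hlt
  · have hβ'A := hD.mem_of_lt γ hγ β' hβ' β hβ hlt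
    rcases hξ' with rfl | hξ'
    · exact hβ'A
    · rw [hC β hβα β' γ hγ hlt hβ'A] at hξ'
      exact hξ'.1
  · exact hξ'.resolve_left (ne_of_lt hξβ)
  · have hβA := hD.mem_of_lt γ hγ β hβ β' hβ' hlt
    rw [hC β' hβ'α β γ hγ hlt hβA]
    exact ⟨hξ'.resolve_left (ne_of_lt (lt_trans hξβ hlt)), hξβ⟩

theorem isCoherentAt_of_eq_glue (hC : ∀ β < α, IsCoherentAt lam A β) (hA : A α = glue A D) :
    IsCoherentAt lam A α := by
  intro β γ hγ _ hβ
  rw [hA] at hβ ⊢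
  obtain ⟨β', hβ', rfl | hβA⟩ := mem_glue.1 hβ
  · exact (glue_inter_Iio_of_mem hF hD hC hγ hβ').symm
  · have hβ'α : β' < α := hD.subset_Iio γ hβ'
    have hββ' : β < β' := (hF β' hβ'α).subset_Iio γ hγ hβA
    rw [hC β' hβ'α β γ hγ hββ' hβA, ← glue_inter_Iio_of_mem hF hD hC hγ hβ', inter_assoc,
      Iio_inter_Iio, min_eq_right hββ'.le]

end Glue

theorem exists_surjOn_Iio {a b : Ordinal.{u}} (h : a.card ≤ b.card) :
    ∃ s : Ordinal → Ordinal, SurjOn s (Iio b) (Iio a) := by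
  rw [← Cardinal.lift_le.{u + 1}, ← Cardinal.mk_Iio_ordinal, ← Cardinal.mk_Iio_ordinal] at h
  obtain ⟨e⟩ := h
  classical
  refine ⟨fun j => if h : ∃ ξ : Iio a, (e ξ : Ordinal) = j then h.choose else 0, fun ξ hξ => ?_⟩
  have h : ∃ ξ' : Iio a, (e ξ' : Ordinal) = e ⟨ξ, hξ⟩ := ⟨_, rfl⟩
  refine ⟨e ⟨ξ, hξ⟩, (e _).2, ?_⟩
  simp only [dif_pos h]
  exact congrArg Subtype.val (e.injective (Subtype.ext h.choose_spec))

theorem mk_Iio_le_of_lt_ord (hγ : γ < (succ lam).ord) : #(Iio γ) ≤ lift.{1} lam := by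
  rw [Cardinal.mk_Iio_ordinal, Cardinal.lift_le]
  exact lt_succ_iff.1 (lt_ord.1 hγ)

-- `sInf ∅ = 0` when `β` never enters `A β'` below `λ⁺`; all that matters then is `level < λ⁺`.
noncomputable def level (lam : Cardinal.{0}) (A : Ordinal.{0} → Ordinal.{0} → Set Ordinal.{0})
    (β β' : Ordinal.{0}) : Ordinal.{0} :=
  sInf {γ | γ < (succ lam).ord ∧ β ∈ A β' γ}

theorem level_lt_ord : level lam A β β' < (succ lam).ord := by
  by_cases h : {γ | γ < (succ lam).ord ∧ β ∈ A β' γ}.Nonempty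
  · exact (csInf_mem h).1
  · rw [level, not_nonempty_iff_eq_empty.1 h, Ordinal.sInf_empty, ord_pos]
    exact zero_le.trans_lt (lt_succ lam)

theorem mem_level (hF : IsFiltration lam β' (A β')) (h : β < β') :
    β ∈ A β' (level lam A β β') :=
  (csInf_mem (hF.exists_mem h)).2

noncomputable def pairBound (lam : Cardinal.{0}) (A : Ordinal.{0} → Ordinal.{0} → Set Ordinal.{0})
    (s : Ordinal.{0} → Ordinal.{0}) (j : Ordinal.{0}) : Ordinal.{0} :=
  sSup ((fun k => max (level lam A (s k) (s j)) (level lam A (s j) (s k))) '' Iio j)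

section PairBound

variable {s : Ordinal.{0} → Ordinal.{0}} {j k : Ordinal.{0}}

theorem level_le_max_pairBound (h : k ≠ j) :
    level lam A (s k) (s j) ≤ max (pairBound lam A s k) (pairBound lam A s j) := by
  have hle : ∀ {k j}, k < j →
      max (level lam A (s k) (s j)) (level lam A (s j) (s k)) ≤ pairBound lam A s j :=
    fun hkj => le_csSup Ordinal.bddAbove_of_small (mem_image_of_mem _ hkj)
  rcases h.lt_or_gt with h | h
  · exact (le_max_left _ _).trans ((hle h).trans (le_max_right _ _))
  · exact (le_max_right _ _).trans ((hle h).trans (le_max_left _ _))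

theorem pairBound_lt_ord (hlam : ℵ₀ ≤ lam) (hj : j < (succ lam).ord) :
    pairBound lam A s j < (succ lam).ord := by
  refine sSup_lt_of_lt_cof ?_ (forall_mem_image.2 fun k _ => max_lt level_lt_ord level_lt_ord)
  rw [← lift_cof, (isRegular_succ hlam).cof_ord]
  exact mk_image_le.trans_lt <|
    (mk_Iio_le_of_lt_ord hj).trans_lt (Cardinal.lift_lt.2 (lt_succ lam))

end PairBound

noncomputable def enumIndexFamily (lam : Cardinal.{0})
    (A : Ordinal.{0} → Ordinal.{0} → Set Ordinal.{0}) (α : Ordinal.{0})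
    (s : Ordinal.{0} → Ordinal.{0}) (γ : Ordinal.{0}) : Set Ordinal.{0} :=
  Iio α ∩ s '' {j | j < γ ∧ pairBound lam A s j < γ}

theorem mem_enumIndexFamily_succ {s : Ordinal.{0} → Ordinal.{0}} {j : Ordinal.{0}} (h : s j < α) :
    s j ∈ enumIndexFamily lam A α s (succ (max j (pairBound lam A s j))) :=
  ⟨h, j, ⟨(le_max_left _ _).trans_lt (lt_succ _), (le_max_right _ _).trans_lt (lt_succ _)⟩, rfl⟩

theorem isIndexFamily_enumIndexFamily (hlam : ℵ₀ ≤ lam) (hF : ∀ β < α, IsFiltration lam β (A β))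
    {s : Ordinal.{0} → Ordinal.{0}} (hs : SurjOn s (Iio (succ lam).ord) (Iio α)) :
    IsIndexFamily lam A α (enumIndexFamily lam A α s) where
  subset_Iio _ := inter_subset_left
  mono γ δ h := inter_subset_inter_right _ <| image_mono fun j hj =>
    ⟨hj.1.trans_le h, hj.2.trans_le h⟩
  zero := by simp [enumIndexFamily]
  continuous := by
    rintro γ hlim β ⟨hβ, j, ⟨hj, hgj⟩, rfl⟩
    have hδ : succ (max j (pairBound lam A s j)) < γ := hlim.succ_lt (max_lt hj hgj)
    exact mem_biUnion hδ (mem_enumIndexFamily_succ hβ)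
  card_le γ hγ := by
    calc #(enumIndexFamily lam A α s γ)
        ≤ #(s '' {j | j < γ ∧ pairBound lam A s j < γ}) := mk_le_mk_of_subset inter_subset_right
      _ ≤ #{j | j < γ ∧ pairBound lam A s j < γ} := mk_image_le
      _ ≤ #(Iio γ) := mk_le_mk_of_subset fun j hj => hj.1
      _ ≤ lift.{1} lam := mk_Iio_le_of_lt_ord hγ
  exists_mem_glue ξ hξ := by
    obtain ⟨j, hj, rfl⟩ := hs hξ
    have hK : IsSuccLimit (succ lam).ord := isSuccLimit_ord (hlam.trans (le_succ lam))
    have hγ : succ (max j (pairBound lam A s j)) < (succ lam).ord :=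
      hK.succ_lt (max_lt hj (pairBound_lt_ord hlam hj))
    exact ⟨_, hγ, mem_glue.2 ⟨s j, mem_enumIndexFamily_succ hξ, .inl rfl⟩⟩
  mem_of_lt := by
    rintro γ hγ _ ⟨-, k, ⟨-, hgk⟩, rfl⟩ _ ⟨hβ'α, j, ⟨-, hgj⟩, rfl⟩ hlt
    have hlevel : level lam A (s k) (s j) < γ :=
      (level_le_max_pairBound fun h => hlt.ne (congrArg s h)).trans_lt (max_lt hgk hgj)
    exact (hF (s j) hβ'α).mono _ γ hlevel hγ (mem_level (hF (s j) hβ'α) hlt)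

theorem exists_isIndexFamily (hlam : ℵ₀ ≤ lam) (hα : α < (succ (succ lam)).ord)
    (hF : ∀ β < α, IsFiltration lam β (A β)) : ∃ D, IsIndexFamily lam A α D := by
  obtain ⟨s, hs⟩ := exists_surjOn_Iio (a := α) (b := (succ lam).ord)
    (by rw [card_ord]; exact lt_succ_iff.1 (lt_ord.1 hα))
  exact ⟨_, isIndexFamily_enumIndexFamily hlam hF hs⟩

noncomputable def coherentFamily (lam : Cardinal.{0}) :
    Ordinal.{0} → Ordinal.{0} → Set Ordinal.{0} :=
  wellFounded_lt.fix fun α A =>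
    let B : Ordinal → Ordinal → Set Ordinal := fun β => if h : β < α then A β h else fun _ => ∅
    glue B (Classical.epsilon (IsIndexFamily lam B α))

theorem exists_coherentFamily_eq_glue (h : ∃ D, IsIndexFamily lam (coherentFamily lam) α D) :
    ∃ D, IsIndexFamily lam (coherentFamily lam) α D ∧
      coherentFamily lam α = glue (coherentFamily lam) D := by
  set B : Ordinal → Ordinal → Set Ordinal :=
    fun β => if β < α then coherentFamily lam β else fun _ => ∅
  have hB : ∀ β < α, B β = coherentFamily lam β := fun β hβ => if_pos hβ
  have hD := Classical.epsilon_spec (h.imp fun D hD => hD.congr fun β hβ => (hB β hβ).symm)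
  exact ⟨_, hD.congr hB, (WellFounded.fix_eq _ _ _).trans (glue_congr hD.subset_Iio hB)⟩

theorem coherentFamily_spec (hlam : ℵ₀ ≤ lam) (hα : α < (succ (succ lam)).ord) :
    IsFiltration lam α (coherentFamily lam α) ∧ IsCoherentAt lam (coherentFamily lam) α := by
  induction α using WellFoundedLT.induction with
  | _ α ih =>
  have hF β (hβ : β < α) := (ih β hβ (hβ.trans hα)).1
  have hC β (hβ : β < α) := (ih β hβ (hβ.trans hα)).2
  obtain ⟨D, hD, hA⟩ := exists_coherentFamily_eq_glue (exists_isIndexFamily hlam hα hF)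
  exact ⟨hA ▸ isFiltration_glue hF hD hlam, isCoherentAt_of_eq_glue hF hD hC hA⟩

end CoherentFiltration

/-- Coherent filtrations: for every infinite cardinal λ there is a family
⟨A^α_γ : γ < λ⁺, α < λ⁺⁺⟩ of sets of size ≤ λ which filtrate each α < λ⁺⁺
increasingly and continuously, coherently. -/
theorem exists_coherent_filtrations (lam : Cardinal.{0}) (hlam : Cardinal.aleph0 ≤ lam) :
    ∃ A : Ordinal.{0} → Ordinal.{0} → Set Ordinal.{0},
      ∀ α < (Order.succ (Order.succ lam)).ord,
        (∀ γ < (Order.succ lam).ord,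
          Cardinal.mk (A α γ) ≤ Cardinal.lift.{1} lam ∧ A α γ ⊆ Set.Iio α) ∧
        A α 0 = ∅ ∧
        (⋃ γ ∈ Set.Iio (Order.succ lam).ord, A α γ) = Set.Iio α ∧
        (∀ γ δ : Ordinal, γ < δ → δ < (Order.succ lam).ord → A α γ ⊆ A α δ) ∧
        (∀ γ < (Order.succ lam).ord, Order.IsSuccLimit γ →
          A α γ = ⋃ δ ∈ Set.Iio γ, A α δ) ∧
        (∀ β γ : Ordinal, γ < (Order.succ lam).ord → β < α → β ∈ A α γ →
          A β γ = A α γ ∩ Set.Iio β) := by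
  refine ⟨CoherentFiltration.coherentFamily lam, fun α hα => ?_⟩
  obtain ⟨hF, hC⟩ := CoherentFiltration.coherentFamily_spec hlam hα
  exact ⟨fun γ hγ => ⟨hF.card_le γ hγ, hF.subset_Iio γ hγ⟩, hF.zero, hF.iUnion_eq, hF.mono,
    hF.continuous, hC⟩
end

section
/- Let λ be a cardinal and suppose there is NO family ⟨C_α : α < λ⁺⁺⟩ of clubs of λ⁺ such that for every club C of λ⁺ there exist α < λ⁺⁺ and λ⁺-many γ ∈ C with min(C \ (γ+1)) ≤ min(C_α \ (γ+1)). Then for any family of functions f_α : λ⁺ → λ⁺ (α < λ⁺⁺) there exists a single function f* : λ⁺ → λ⁺ such that for every α < λ⁺⁺, f_α(γ) < f*(γ) for all sufficiently large γ < λ⁺. -/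
/-!
For each `α`, the closure points of `f α` form a club `C_α` of `λ⁺`. Negating the hypothesis
gives a club `C` such that, for every `α`, the points `γ ∈ C` whose successor in `C` is at most
their successor in `C_α` are fewer than `λ⁺`, hence bounded below `λ⁺`. Above that bound,
between `γ` and the second successor of `γ` in `C` there is a point of `C_α`, so the function
"second successor in `C`" eventually dominates `f α`.
-/

/-- C is a club (closed unbounded set) of the ordinal o. -/
def IsClubIn (o : Ordinal.{0}) (C : Set Ordinal.{0}) : Prop :=
  C ⊆ Set.Iio o ∧
  (∀ S : Set Ordinal, S ⊆ C → S.Nonempty → sSup S < o → sSup S ∈ C) ∧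
  (∀ a < o, ∃ c ∈ C, a < c)

open Cardinal Ordinal Set

noncomputable def nextAbove (C : Set Ordinal.{0}) (γ : Ordinal.{0}) : Ordinal.{0} :=
  sInf {x | x ∈ C ∧ γ < x}

namespace IsClubIn

variable {o : Ordinal.{0}} {C : Set Ordinal.{0}} {γ : Ordinal.{0}}

theorem nextAbove_mem_and_lt (hC : IsClubIn o C) (hγ : γ < o) :
    nextAbove C γ ∈ C ∧ γ < nextAbove C γ := by
  obtain ⟨c, hc, hγc⟩ := hC.2.2 γ hγ
  exact csInf_mem (s := {x | x ∈ C ∧ γ < x}) ⟨c, hc, hγc⟩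

theorem nextAbove_lt (hC : IsClubIn o C) (hγ : γ < o) : nextAbove C γ < o :=
  hC.1 (hC.nextAbove_mem_and_lt hγ).1

end IsClubIn

theorem sSup_lt_ord_of_mk_lt {c : Cardinal.{u}} (hc : c.IsRegular) {s : Set Ordinal.{u}}
    (hs : ∀ x ∈ s, x < c.ord) (hsc : #s < Cardinal.lift.{u + 1} c) : sSup s < c.ord :=
  Ordinal.sSup_lt_of_lt_cof (by rwa [← Ordinal.lift_cof, hc.cof_ord]) hs

theorem isClubIn_closurePoints {c : Cardinal.{0}} (hc : c.IsRegular) (hℵ₀ : ℵ₀ < c)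
    {F : Ordinal.{0} → Ordinal.{0}} (hF : ∀ δ < c.ord, F δ < c.ord) :
    IsClubIn c.ord {γ | γ < c.ord ∧ ∀ δ < γ, F δ < γ} := by
  refine ⟨fun γ hγ => hγ.1, ?closed, ?unbounded⟩
  case closed =>
    intro S hS hne hlt
    refine ⟨hlt, fun δ hδ => ?_⟩
    obtain ⟨s, hsS, hδs⟩ := exists_lt_of_lt_csSup hne hδ
    exact ((hS hsS).2 δ hδs).trans_le (le_csSup ⟨c.ord, fun x hx => (hS hx).1.le⟩ hsS)
  case unbounded =>
    intro a ha
    -- The ω-th iterate of `jump` above `a` is a closure point of `F`.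
    let jump (x : Ordinal.{0}) : Ordinal.{0} := ⨆ δ : Iio x, F δ + 1
    have hjump : ∀ x < c.ord, jump x < c.ord := fun x hx =>
      Ordinal.lift_iSup_add_one_lt_of_lt_cof
        (by
          rw [Cardinal.lift_uzero, Cardinal.mk_Iio_ordinal, ← Ordinal.lift_cof, hc.cof_ord,
            Cardinal.lift_lt]
          exact Cardinal.lt_ord.1 hx)
        (fun δ => hF δ (δ.2.trans hx))
    have hsucc : a + 1 < c.ord := (Cardinal.isSuccLimit_ord hℵ₀.le).add_one_lt ha
    refine ⟨nfp jump (a + 1), ⟨?_, fun δ hδ => ?_⟩, ?_⟩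
    · exact nfp_lt_ord (by rwa [hc.cof_ord]) hjump hsucc
    · obtain ⟨n, hn⟩ := lt_nfp_iff.1 hδ
      calc F δ < F δ + 1 := Order.lt_add_one_iff.2 le_rfl
        _ ≤ jump (jump^[n] (a + 1)) :=
          Ordinal.le_iSup (fun δ : Iio _ => F δ + 1) ⟨δ, hn⟩
        _ ≤ nfp jump (a + 1) := by
          rw [← Function.iterate_succ_apply' jump]
          exact iterate_le_nfp _ _ _
    · exact (Order.lt_add_one_iff.2 le_rfl).trans_le (le_nfp _ _)

theorem lt_nextAbove_nextAbove {o : Ordinal.{0}} {C D : Set Ordinal.{0}}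
    (hC : IsClubIn o C) (hD : IsClubIn o D) {F : Ordinal.{0} → Ordinal.{0}}
    (hDF : ∀ x ∈ D, ∀ δ < x, F δ < x) {γ₀ : Ordinal.{0}}
    (hγ₀ : ∀ x ∈ C, γ₀ < x → nextAbove D x < nextAbove C x) {γ : Ordinal.{0}}
    (hγ₀γ : γ₀ ≤ γ) (hγ : γ < o) : F γ < nextAbove C (nextAbove C γ) := by
  obtain ⟨hxC, hγx⟩ := hC.nextAbove_mem_and_lt hγ
  obtain ⟨hyD, hxy⟩ := hD.nextAbove_mem_and_lt (hC.nextAbove_lt hγ)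
  calc F γ < nextAbove D (nextAbove C γ) := hDF _ hyD γ (hγx.trans hxy)
    _ < nextAbove C (nextAbove C γ) := hγ₀ _ hxC (hγ₀γ.trans_lt hγx)

/-- If there is no family ⟨C_α : α < λ⁺⁺⟩ of clubs of λ⁺ such that every club C of λ⁺
has, for some α, λ⁺-many γ ∈ C with min(C \ (γ+1)) ≤ min(C_α \ (γ+1)), then every
λ⁺⁺-family of functions λ⁺ → λ⁺ is eventually dominated by a single function. -/
theorem eventually_dominating_function_of_no_club_family (lam : Cardinal.{0})
    (hlam : Cardinal.aleph0 ≤ lam)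
    (hno : ¬ ∃ Cfam : Ordinal.{0} → Set Ordinal.{0},
      (∀ α < (Order.succ (Order.succ lam)).ord, IsClubIn (Order.succ lam).ord (Cfam α)) ∧
      ∀ C : Set Ordinal.{0}, IsClubIn (Order.succ lam).ord C →
        ∃ α < (Order.succ (Order.succ lam)).ord,
          Cardinal.lift.{1} (Order.succ lam) ≤
            Cardinal.mk {γ : Ordinal // γ ∈ C ∧
              sInf {x | x ∈ C ∧ γ < x} ≤ sInf {x | x ∈ Cfam α ∧ γ < x}}) :
    ∀ f : Ordinal.{0} → Ordinal.{0} → Ordinal.{0},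
      (∀ α < (Order.succ (Order.succ lam)).ord, ∀ γ < (Order.succ lam).ord,
        f α γ < (Order.succ lam).ord) →
      ∃ g : Ordinal.{0} → Ordinal.{0},
        (∀ γ < (Order.succ lam).ord, g γ < (Order.succ lam).ord) ∧
        ∀ α < (Order.succ (Order.succ lam)).ord,
          ∃ γ₀ < (Order.succ lam).ord,
            ∀ γ, γ₀ ≤ γ → γ < (Order.succ lam).ord → f α γ < g γ := by
  intro f hf
  have hreg : (Order.succ lam).IsRegular := Cardinal.isRegular_succ hlam
  have hℵ₀ : ℵ₀ < Order.succ lam := hlam.trans_lt (Order.lt_succ lam)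
  let Cfam (α : Ordinal.{0}) := {γ | γ < (Order.succ lam).ord ∧ ∀ δ < γ, f α δ < γ}
  have hclub : ∀ α < (Order.succ (Order.succ lam)).ord, IsClubIn (Order.succ lam).ord (Cfam α) :=
    fun α hα => isClubIn_closurePoints hreg hℵ₀ (hf α hα)
  obtain ⟨C, hC, hsmall⟩ := by
    push Not at hno
    exact hno Cfam hclub
  refine ⟨fun γ => nextAbove C (nextAbove C γ), fun γ hγ => hC.nextAbove_lt (hC.nextAbove_lt hγ),
    fun α hα => ?_⟩
  let B := {γ | γ ∈ C ∧ nextAbove C γ ≤ nextAbove (Cfam α) γ}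
  have hB : sSup B < (Order.succ lam).ord :=
    sSup_lt_ord_of_mk_lt hreg (fun γ hγ => hC.1 hγ.1) (hsmall α hα)
  refine ⟨sSup B, hB, fun γ hγ₀γ hγ => ?_⟩
  refine lt_nextAbove_nextAbove hC (hclub α hα) (fun x hx => hx.2) (fun x hxC hx => ?_)
    hγ₀γ hγ
  exact lt_of_not_ge fun hle => hx.not_ge (le_csSup ⟨_, fun y hy => (hC.1 hy.1).le⟩ ⟨hxC, hle⟩)
end
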